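/- Let s ≥ 1 and n = 2s. In the symplectic coordinates p_i(v) = x_{2i}(v) for 1 ≤ i ≤ s and q_i(v) = x_{2i−1}(v) − x_{2i+1}(v) for 1 ≤ i ≤ s−1, q_s(v) = x_{2s−1}(v), let τ be the linear automorphism of ℤ^{2s} acting by the cyclic shift q_i ↦ q_{i+1}, p_i ↦ p_{i+1} (indices taken modulo s, so q_s ↦ q_1 and p_s ↦ p_1). Then τ preserves the form J, and the subgroup of GL(2s, ℤ) generated by 𝒢_{2s} together with τ is the full integral symplectic group Sp_J(2s, ℤ) = { M ∈ GL(2s, ℤ) : J(Mv, Mw) = J(v, w) for all v, w }. -/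

import Mathlib

/-- The index `i - 1` as an element of `Fin n`. -/
def ipred {n : ℕ} (i : Fin n) : Fin n :=
  ⟨(i : ℕ) - 1, lt_of_le_of_lt (Nat.sub_le _ _) i.isLt⟩

/-- Forward action of the generator `S_{i+1}` (0-indexed `i`) on `ℤ^n`:
for `i = 0` it is `k_0 ↦ k_0`, `k_j ↦ k_j + k_0` (`j ≠ 0`); for `i ≥ 1` it is
`k_{i-1} ↦ 2 k_{i-1} - k_i`, `k_i ↦ k_{i-1}`, fixing the other coordinates. -/
def SFun (n : ℕ) (i : Fin n) (v : Fin n → ℤ) : Fin n → ℤ := fun j =>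
  if (i : ℕ) = 0 then (if (j : ℕ) = 0 then v j else v j + v i)
  else
    if j = ipred i then 2 * v j - v i
    else if j = i then v (ipred i) else v j

/-- Inverse of `SFun`. -/
def SInvFun (n : ℕ) (i : Fin n) (w : Fin n → ℤ) : Fin n → ℤ := fun j =>
  if (i : ℕ) = 0 then (if (j : ℕ) = 0 then w j else w j - w i)
  else
    if j = ipred i then w i
    else if j = i then 2 * w i - w (ipred i) else w j

theorem ipred_ne {n : ℕ} (i : Fin n) (h : ¬ (i : ℕ) = 0) : ipred i ≠ i := by
  intro hc
  have := congrArg Fin.val hc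
  simp [ipred] at this
  omega

theorem left_inv_S (n : ℕ) (i : Fin n) (v : Fin n → ℤ) : SInvFun n i (SFun n i v) = v := by
  by_cases h : (i : ℕ) = 0
  · funext j
    have hi0 : (i : ℕ) = 0 → ((i : ℕ) = 0) := id
    by_cases hj : (j : ℕ) = 0
    · simp [SFun, SInvFun, h, hj]
    · have hji : j ≠ i := by intro hc; exact hj (by rw [hc]; exact h)
      simp [SFun, SInvFun, h, hj]
  · have hne := ipred_ne i h
    funext j
    by_cases h1 : j = ipred i
    · simp [SFun, SInvFun, h, h1, if_neg hne, if_neg (Ne.symm hne)]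
    · by_cases h2 : j = i
      · simp [SFun, SInvFun, h, h1, h2, if_neg hne, if_neg (Ne.symm hne)]
        try ring
      · simp [SFun, SInvFun, h, h1, h2]

theorem right_inv_S (n : ℕ) (i : Fin n) (v : Fin n → ℤ) : SFun n i (SInvFun n i v) = v := by
  by_cases h : (i : ℕ) = 0
  · funext j
    by_cases hj : (j : ℕ) = 0
    · simp [SFun, SInvFun, h, hj]
    · simp [SFun, SInvFun, h, hj]
  · have hne := ipred_ne i h
    funext j
    by_cases h1 : j = ipred i
    · simp [SFun, SInvFun, h, h1, if_neg hne, if_neg (Ne.symm hne)]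
      try ring
    · by_cases h2 : j = i
      · simp [SFun, SInvFun, h, h1, h2, if_neg hne, if_neg (Ne.symm hne)]
      · simp [SFun, SInvFun, h, h1, h2]

theorem map_add_S (n : ℕ) (i : Fin n) (v w : Fin n → ℤ) :
    SFun n i (v + w) = SFun n i v + SFun n i w := by
  funext j
  simp only [SFun, Pi.add_apply]
  split_ifs <;> ring

/-- The generator `S_{i+1}` as a `ℤ`-linear automorphism of `ℤ^n`. -/
def Sgen (n : ℕ) (i : Fin n) : (Fin n → ℤ) ≃ₗ[ℤ] (Fin n → ℤ) :=
  AddEquiv.toIntLinearEquiv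
    { toFun := SFun n i
      invFun := SInvFun n i
      left_inv := left_inv_S n i
      right_inv := right_inv_S n i
      map_add' := map_add_S n i }

/-- The group `𝒢_n`: the subgroup of automorphisms of `ℤ^n` generated by `S_1, …, S_n`. -/
def Gn (n : ℕ) : Subgroup ((Fin n → ℤ) ≃ₗ[ℤ] (Fin n → ℤ)) :=
  Subgroup.closure (Set.range (Sgen n))

/-- `x_i(v) = Σ_{j ≤ i} (−1)^{i−j} k_j` (0-indexed). -/
def xcoord {R : Type*} [CommRing R] {n : ℕ} (i : Fin n) (v : Fin n → R) : R :=
  ∑ j : Fin n, if j ≤ i then (-1 : R) ^ ((i : ℕ) - (j : ℕ)) * v j else 0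

/-- The alternating form `J(v,w) = Σ_{i=1}^{n-1} (x_i(v) x_{i+1}(w) − x_{i+1}(v) x_i(w))`. -/
def Jform {R : Type*} [CommRing R] {n : ℕ} (v w : Fin n → R) : R :=
  ∑ i : Fin n, if h : (i : ℕ) + 1 < n then
      xcoord i v * xcoord ⟨(i : ℕ) + 1, h⟩ w - xcoord ⟨(i : ℕ) + 1, h⟩ v * xcoord i w
    else 0

/-- `γ(v)`: the gcd of the coordinates. -/
def gam {n : ℕ} (v : Fin n → ℤ) : ℤ := Finset.univ.gcd v

open Classical in
/-- `α(v)`: the number of coordinates `i` with `k_i / γ(v)` odd. -/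
noncomputable def alph {n : ℕ} (v : Fin n → ℤ) : ℕ :=
  (Finset.univ.filter fun i => Odd (v i / gam v)).card

/-- `δ(v) = |2 α(v) − n − 1|`. -/
noncomputable def delt {n : ℕ} (v : Fin n → ℤ) : ℤ := |2 * (alph v : ℤ) - (n : ℤ) - 1|

/-- For odd `n`, the invariant `x(v) = k_1 − k_2 + ⋯ + k_n`. -/
def xalt {n : ℕ} (v : Fin n → ℤ) : ℤ := ∑ j : Fin n, (-1 : ℤ) ^ (j : ℕ) * v j

/-- The integral symplectic group of the form `J`: all automorphisms of `ℤ^n`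
preserving `J`. -/
def SpJ (n : ℕ) : Subgroup ((Fin n → ℤ) ≃ₗ[ℤ] (Fin n → ℤ)) where
  carrier := {T | ∀ v w, Jform (T v) (T w) = Jform v w}
  one_mem' := by intro v w; rfl
  mul_mem' := by
    intro a b ha hb v w
    have h1 : ∀ u, (a * b) u = a (b u) := fun u => rfl
    rw [h1, h1, ha, hb]
  inv_mem' := by
    intro a ha v w
    have h1 : ∀ u, a (a⁻¹ u) = u := fun u => a.apply_symm_apply u
    have h2 := ha (a⁻¹ v) (a⁻¹ w)
    rw [h1, h1] at h2
    exact h2.symm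

/-- The symplectic coordinate `p_i(v) = x_{2i}(v)` (1-indexed), for `i : Fin s`. -/
def pcoord (s : ℕ) (i : Fin s) (v : Fin (2 * s) → ℤ) : ℤ :=
  xcoord ⟨2 * (i : ℕ) + 1, by have := i.isLt; omega⟩ v

/-- The symplectic coordinate `q_i(v) = x_{2i-1}(v) − x_{2i+1}(v)` for `i < s`, and
`q_s(v) = x_{2s-1}(v)` (1-indexed), for `i : Fin s`. -/
def qcoord (s : ℕ) (i : Fin s) (v : Fin (2 * s) → ℤ) : ℤ :=
  if h : (i : ℕ) + 1 < s then
    xcoord ⟨2 * (i : ℕ), by have := i.isLt; omega⟩ v -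
      xcoord ⟨2 * (i : ℕ) + 2, by omega⟩ v
  else xcoord ⟨2 * (i : ℕ), by have := i.isLt; omega⟩ v



namespace St19

open Finset

set_option maxHeartbeats 1600000

lemma xcoord_add {n : ℕ} (i : Fin n) (v w : Fin n → ℤ) :
    xcoord i (v + w) = xcoord i v + xcoord i w := by
  unfold xcoord
  rw [← Finset.sum_add_distrib]
  refine Finset.sum_congr rfl fun j _ => ?_
  by_cases h : j ≤ i
  · simp only [h, if_true, Pi.add_apply]; ring
  · simp [h]

lemma xcoord_mul {n : ℕ} (i : Fin n) (c : ℤ) (v : Fin n → ℤ) :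
    xcoord i (fun k => c * v k) = c * xcoord i v := by
  unfold xcoord
  rw [Finset.mul_sum]
  refine Finset.sum_congr rfl fun j _ => ?_
  by_cases h : j ≤ i
  · simp only [h, if_true]; ring
  · simp [h]

lemma xcoord_zero {n : ℕ} (h : 0 < n) (v : Fin n → ℤ) : xcoord ⟨0, h⟩ v = v ⟨0, h⟩ := by
  unfold xcoord
  rw [Finset.sum_eq_single (⟨0, h⟩ : Fin n)]
  · simp
  · intro j _ hj
    rw [if_neg]
    intro hle
    apply hj
    apply Fin.ext
    have h0 : ((⟨0, h⟩ : Fin n) : ℕ) = 0 := rfl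
    rw [Fin.le_def, h0] at hle
    simpa [h0] using Nat.le_zero.mp hle
  · intro hc; exact absurd (Finset.mem_univ _) hc

lemma xcoord_succ {n : ℕ} (i : ℕ) (h : i + 1 < n) (v : Fin n → ℤ) :
    xcoord ⟨i+1, h⟩ v = v ⟨i+1, h⟩ - xcoord ⟨i, by omega⟩ v := by
  have key : ∀ j : Fin n,
      (if j ≤ (⟨i+1, h⟩ : Fin n) then (-1:ℤ)^((i+1) - (j:ℕ)) * v j else 0)
      = (if j = ⟨i+1, h⟩ then v j else 0)
        - (if j ≤ (⟨i, by omega⟩ : Fin n) then (-1:ℤ)^(i - (j:ℕ)) * v j else 0) := by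
    intro j
    by_cases hj : (j : ℕ) = i + 1
    · have hj' : j = ⟨i+1, h⟩ := Fin.ext hj
      have h1 : j ≤ (⟨i+1, h⟩ : Fin n) := le_of_eq hj'
      have h2 : ¬ j ≤ (⟨i, by omega⟩ : Fin n) := by
        rw [Fin.le_def]; simp; omega
      rw [if_pos h1, if_pos hj', if_neg h2, hj]
      simp
    · by_cases hj2 : (j : ℕ) ≤ i
      · have h1 : j ≤ (⟨i+1, h⟩ : Fin n) := by rw [Fin.le_def]; simp; omega
        have h2 : j ≤ (⟨i, by omega⟩ : Fin n) := by rw [Fin.le_def]; simp; omega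
        have h3 : j ≠ ⟨i+1, h⟩ := fun hc => hj (by rw [hc])
        rw [if_pos h1, if_pos h2, if_neg h3]
        have he : (i+1) - (j:ℕ) = (i - (j:ℕ)) + 1 := by omega
        rw [he, pow_succ]
        ring
      · have h1 : ¬ j ≤ (⟨i+1, h⟩ : Fin n) := by rw [Fin.le_def]; simp; omega
        have h2 : ¬ j ≤ (⟨i, by omega⟩ : Fin n) := by rw [Fin.le_def]; simp; omega
        have h3 : j ≠ ⟨i+1, h⟩ := fun hc => hj (by rw [hc])
        rw [if_neg h1, if_neg h2, if_neg h3]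
        simp
  unfold xcoord
  calc (∑ j : Fin n, if j ≤ (⟨i+1, h⟩ : Fin n) then (-1:ℤ)^((i+1) - (j:ℕ)) * v j else 0)
      = ∑ j : Fin n, ((if j = ⟨i+1, h⟩ then v j else 0)
        - (if j ≤ (⟨i, by omega⟩ : Fin n) then (-1:ℤ)^(i - (j:ℕ)) * v j else 0)) :=
        Finset.sum_congr rfl fun j _ => key j
    _ = _ := by
        rw [Finset.sum_sub_distrib, Finset.sum_ite_eq' Finset.univ (⟨i+1, h⟩ : Fin n) v]
        simp

/-- ℕ-indexed xcoord, 0 out of range. -/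
def Xc (s : ℕ) (i : ℕ) (v : Fin (2*s) → ℤ) : ℤ :=
  if h : i < 2*s then xcoord ⟨i, h⟩ v else 0

lemma Xc_out {s : ℕ} {i : ℕ} (h : 2*s ≤ i) (v : Fin (2*s) → ℤ) : Xc s i v = 0 :=
  dif_neg (by omega)

lemma Xc_zero {s : ℕ} (h : 0 < s) (v : Fin (2*s) → ℤ) :
    Xc s 0 v = v ⟨0, by omega⟩ := by
  rw [Xc, dif_pos (by omega : 0 < 2*s), xcoord_zero]

lemma Xc_succ {s : ℕ} {i : ℕ} (h : i + 1 < 2*s) (v : Fin (2*s) → ℤ) :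
    Xc s (i+1) v = v ⟨i+1, h⟩ - Xc s i v := by
  rw [Xc, dif_pos h, Xc, dif_pos (by omega : i < 2*s), xcoord_succ i h v]

lemma Xc_add {s : ℕ} (i : ℕ) (v w : Fin (2*s) → ℤ) :
    Xc s i (v + w) = Xc s i v + Xc s i w := by
  unfold Xc
  by_cases h : i < 2*s
  · rw [dif_pos h, dif_pos h, dif_pos h, xcoord_add]
  · simp [dif_neg h]

lemma Xc_mul {s : ℕ} (i : ℕ) (c : ℤ) (v : Fin (2*s) → ℤ) :
    Xc s i (fun k => c * v k) = c * Xc s i v := by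
  unfold Xc
  by_cases h : i < 2*s
  · rw [dif_pos h, dif_pos h, xcoord_mul]
  · simp [dif_neg h]

lemma apply_eq_Xc {s : ℕ} (v : Fin (2*s) → ℤ) (i : Fin (2*s)) :
    v i = Xc s (i:ℕ) v + (if (i:ℕ) = 0 then 0 else Xc s ((i:ℕ)-1) v) := by
  rcases Nat.eq_zero_or_pos (i : ℕ) with h0 | hpos
  · have hs : 0 < s := by have := i.isLt; omega
    have hi : i = ⟨0, by omega⟩ := Fin.ext h0
    rw [hi]
    simp [Xc_zero hs]
  · obtain ⟨j, hj⟩ : ∃ j, (i : ℕ) = j + 1 := ⟨(i:ℕ) - 1, by omega⟩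
    have hlt : j + 1 < 2*s := hj ▸ i.isLt
    have hi : i = ⟨j+1, hlt⟩ := Fin.ext hj
    have hval : ((⟨j+1, hlt⟩ : Fin (2*s)) : ℕ) = j + 1 := rfl
    rw [hi, hval, if_neg (by omega), Xc_succ hlt v]
    have h2 : j + 1 - 1 = j := rfl
    rw [h2]
    ring

lemma Xc_inj {s : ℕ} {v w : Fin (2*s) → ℤ} (h : ∀ i, Xc s i v = Xc s i w) : v = w := by
  funext i
  rw [apply_eq_Xc v i, apply_eq_Xc w i, h]
  by_cases h0 : (i:ℕ) = 0
  · simp [h0]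
  · rw [if_neg h0, if_neg h0, h]

lemma q_eq_Xc {s : ℕ} (j : Fin s) (v : Fin (2*s) → ℤ) :
    qcoord s j v = Xc s (2*(j:ℕ)) v - Xc s (2*(j:ℕ)+2) v := by
  unfold qcoord
  by_cases h : (j:ℕ) + 1 < s
  · rw [dif_pos h, Xc, dif_pos (by omega : 2*(j:ℕ) < 2*s),
      Xc, dif_pos (by omega : 2*(j:ℕ)+2 < 2*s)]
  · rw [dif_neg h, Xc, dif_pos (by have := j.isLt; omega : 2*(j:ℕ) < 2*s),
      Xc_out (by have := j.isLt; omega)]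
    ring

lemma p_eq_Xc {s : ℕ} (j : Fin s) (v : Fin (2*s) → ℤ) :
    pcoord s j v = Xc s (2*(j:ℕ)+1) v := by
  unfold pcoord
  rw [Xc, dif_pos (by have := j.isLt; omega : 2*(j:ℕ)+1 < 2*s)]

/-- ℕ-indexed q coordinate. -/
def Qc (s m : ℕ) (v : Fin (2*s) → ℤ) : ℤ := Xc s (2*m) v - Xc s (2*m+2) v
/-- ℕ-indexed p coordinate. -/
def Pc (s m : ℕ) (v : Fin (2*s) → ℤ) : ℤ := Xc s (2*m+1) v

lemma qcoord_eq_Qc {s : ℕ} (j : Fin s) (v : Fin (2*s) → ℤ) :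
    qcoord s j v = Qc s (j:ℕ) v := q_eq_Xc j v

lemma pcoord_eq_Pc {s : ℕ} (j : Fin s) (v : Fin (2*s) → ℤ) :
    pcoord s j v = Pc s (j:ℕ) v := p_eq_Xc j v

lemma Qc_out {s m : ℕ} (h : s ≤ m) (v : Fin (2*s) → ℤ) : Qc s m v = 0 := by
  unfold Qc
  rw [Xc_out (by omega), Xc_out (by omega)]
  ring

lemma Pc_out {s m : ℕ} (h : s ≤ m) (v : Fin (2*s) → ℤ) : Pc s m v = 0 := by
  unfold Pc
  rw [Xc_out (by omega)]

lemma Xc_even_eq {s : ℕ} {v w : Fin (2*s) → ℤ}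
    (hQ : ∀ m, Qc s m v = Qc s m w) :
    ∀ d j, s ≤ j + d → Xc s (2*j) v = Xc s (2*j) w := by
  intro d
  induction d with
  | zero => intro j hj; rw [Xc_out (by omega), Xc_out (by omega)]
  | succ d ih =>
    intro j hj
    by_cases hjs : s ≤ j
    · rw [Xc_out (by omega), Xc_out (by omega)]
    · have h1 : Xc s (2*j) v = Qc s j v + Xc s (2*(j+1)) v := by
        unfold Qc; ring_nf
      have h2 : Xc s (2*j) w = Qc s j w + Xc s (2*(j+1)) w := by
        unfold Qc; ring_nf
      rw [h1, h2, hQ j, ih (j+1) (by omega)]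

/-- Coordinates determine the vector. -/
lemma coords_det {s : ℕ} {v w : Fin (2*s) → ℤ}
    (hQ : ∀ m, Qc s m v = Qc s m w) (hP : ∀ m, Pc s m v = Pc s m w) : v = w := by
  apply Xc_inj
  intro i
  rcases Nat.even_or_odd i with ⟨j, hj⟩ | ⟨j, hj⟩
  · have : i = 2*j := by omega
    rw [this]
    exact Xc_even_eq hQ s j (by omega)
  · have : i = 2*j+1 := by omega
    rw [this]
    exact hP j

lemma sum_range_pair (f : ℕ → ℤ) (n : ℕ) :
    ∑ i ∈ Finset.range (2*n), f i = ∑ m ∈ Finset.range n, (f (2*m) + f (2*m+1)) := by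
  induction n with
  | zero => simp
  | succ n ih =>
    have h : 2*(n+1) = (2*n)+1+1 := by ring
    rw [h, Finset.sum_range_succ, Finset.sum_range_succ, ih, Finset.sum_range_succ]
    ring

lemma Xc_pos {s : ℕ} {i : ℕ} (h : i < 2*s) (v : Fin (2*s) → ℤ) :
    Xc s i v = xcoord ⟨i, h⟩ v := dif_pos h

/-- symplectic pairing form of J (R3). -/
lemma Jform_pairs {s : ℕ} (v w : Fin (2*s) → ℤ) :
    Jform v w = ∑ m : Fin s,
      (qcoord s m v * pcoord s m w - pcoord s m v * qcoord s m w) := by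
  have step1 : Jform v w = ∑ i ∈ Finset.range (2*s),
      (Xc s i v * Xc s (i+1) w - Xc s (i+1) v * Xc s i w) := by
    unfold Jform
    rw [← Fin.sum_univ_eq_sum_range
      (fun i => (Xc s i v * Xc s (i+1) w - Xc s (i+1) v * Xc s i w)) (2*s)]
    refine Finset.sum_congr rfl fun i _ => ?_
    by_cases h : (i:ℕ) + 1 < 2*s
    · rw [dif_pos h, Xc_pos i.isLt v, Xc_pos i.isLt w, Xc_pos h v, Xc_pos h w]
    · rw [dif_neg h, Xc_out (show 2*s ≤ (i:ℕ)+1 by omega) v,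
        Xc_out (show 2*s ≤ (i:ℕ)+1 by omega) w]
      ring
  have step2 : ∀ m : Fin s,
      qcoord s m v * pcoord s m w - pcoord s m v * qcoord s m w
      = Xc s (2*(m:ℕ)) v * Xc s (2*(m:ℕ)+1) w - Xc s (2*(m:ℕ)+1) v * Xc s (2*(m:ℕ)) w
        + (Xc s (2*(m:ℕ)+1) v * Xc s (2*(m:ℕ)+1+1) w
            - Xc s (2*(m:ℕ)+1+1) v * Xc s (2*(m:ℕ)+1) w) := by
    intro m
    have e1 : 2*(m:ℕ)+1+1 = 2*(m:ℕ)+2 := by omega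
    rw [qcoord_eq_Qc, qcoord_eq_Qc, pcoord_eq_Pc, pcoord_eq_Pc, e1]
    unfold Qc Pc
    ring
  rw [step1, sum_range_pair, ← Fin.sum_univ_eq_sum_range
      (fun m => Xc s (2*m) v * Xc s (2*m+1) w - Xc s (2*m+1) v * Xc s (2*m) w
        + (Xc s (2*m+1) v * Xc s (2*m+1+1) w - Xc s (2*m+1+1) v * Xc s (2*m+1) w)) s]
  exact Finset.sum_congr rfl fun m _ => (step2 m).symm

/-- indicator vector -/
def ind {n : ℕ} (a : Fin n) : Fin n → ℤ := fun k => if k = a then 1 else 0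

lemma Xc_ind {s : ℕ} (a : Fin (2*s)) (j : ℕ) :
    Xc s j (ind a) = if (a:ℕ) ≤ j ∧ j < 2*s then (-1:ℤ)^(j - (a:ℕ)) else 0 := by
  by_cases h : j < 2*s
  · rw [Xc_pos h]
    unfold xcoord
    rw [Finset.sum_eq_single a]
    · by_cases hle : (a:ℕ) ≤ j
      · rw [if_pos (show a ≤ ⟨j,h⟩ by rw [Fin.le_def]; exact hle),
          if_pos (show (a:ℕ) ≤ j ∧ j < 2*s from ⟨hle, h⟩)]
        simp [ind]
      · rw [if_neg (show ¬ a ≤ ⟨j,h⟩ by rw [Fin.le_def]; exact hle),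
          if_neg (show ¬ ((a:ℕ) ≤ j ∧ j < 2*s) by tauto)]
    · intro b _ hb
      simp [ind, hb]
    · intro hc; exact absurd (Finset.mem_univ _) hc
  · rw [Xc_out (by omega), if_neg (by tauto)]

lemma SFun_eq_pos {s : ℕ} (i : Fin (2*s)) (hi : 0 < (i:ℕ)) (v : Fin (2*s) → ℤ) :
    SFun (2*s) i v
      = v + (fun k => (v (ipred i) - v i) * (ind (ipred i) k + ind i k)) := by
  funext j
  have hne : ipred i ≠ i := ipred_ne i (by omega)
  simp only [SFun, Pi.add_apply, ind]
  rw [if_neg (by omega : ¬ (i:ℕ) = 0)]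
  by_cases h1 : j = ipred i
  · rw [if_pos h1, if_pos h1, if_neg (h1 ▸ hne), h1]
    ring
  · rw [if_neg h1, if_neg h1]
    by_cases h2 : j = i
    · rw [if_pos h2, if_pos h2, h2]
      ring
    · rw [if_neg h2, if_neg h2]
      ring

lemma Xc_SFun_pos {s : ℕ} (i : Fin (2*s)) (hi : 0 < (i:ℕ)) (v : Fin (2*s) → ℤ) (j : ℕ) :
    Xc s j (SFun (2*s) i v)
      = Xc s j v + (if j = (i:ℕ) - 1 then v (ipred i) - v i else 0) := by
  rw [SFun_eq_pos i hi v]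
  have hD : ∀ k, (v (ipred i) - v i) * (ind (ipred i) k + ind i k)
      = (v (ipred i) - v i) * ((fun t => ind (ipred i) t + ind i t) k) := fun k => rfl
  rw [Xc_add, Xc_mul j (v (ipred i) - v i) (fun t => ind (ipred i) t + ind i t)]
  have hsum : Xc s j (fun t => ind (ipred i) t + ind i t)
      = Xc s j (ind (ipred i)) + Xc s j (ind i) := Xc_add j _ _
  rw [hsum, Xc_ind, Xc_ind]
  have hip : ((ipred i : Fin (2*s)) : ℕ) = (i:ℕ) - 1 := rfl
  rw [hip]
  congr 1
  by_cases hj : j = (i:ℕ) - 1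
  · subst hj
    rw [if_pos ⟨le_refl _, by have := i.isLt; omega⟩, if_neg (by omega)]
    simp
  · rw [if_neg hj]
    by_cases hj2 : (i:ℕ) ≤ j ∧ j < 2*s
    · rw [if_pos ⟨by omega, hj2.2⟩, if_pos hj2]
      have he : j - ((i:ℕ) - 1) = (j - (i:ℕ)) + 1 := by omega
      rw [he, pow_succ]
      ring
    · rw [if_neg (by omega), if_neg hj2]
      ring

/-- the vector with 0 in coordinate 0 and 1 elsewhere -/
def onesp (s : ℕ) : Fin (2*s) → ℤ := fun k => if (k:ℕ) = 0 then 0 else 1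

lemma Xc_onesp {s : ℕ} : ∀ j, Xc s j (onesp s) = if j < 2*s ∧ j % 2 = 1 then 1 else 0 := by
  intro j
  induction j with
  | zero =>
    by_cases h : 0 < 2*s
    · rw [Xc_zero (by omega), if_neg (by omega)]
      rfl
    · rw [Xc_out (by omega), if_neg (by omega)]
  | succ j ih =>
    by_cases h : j + 1 < 2*s
    · rw [Xc_succ h, ih]
      have : onesp s ⟨j+1, h⟩ = 1 := by unfold onesp; rw [if_neg (by simp)]
      rw [this]
      rcases Nat.even_or_odd j with ⟨t, ht⟩ | ⟨t, ht⟩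
      · rw [if_neg (by omega), if_pos ⟨h, by omega⟩]
        ring
      · rw [if_pos ⟨by omega, by omega⟩, if_neg (by omega)]
        ring
    · rw [Xc_out (by omega), if_neg (by omega)]

lemma SFun_eq_zero {s : ℕ} (i : Fin (2*s)) (hi : (i:ℕ) = 0) (v : Fin (2*s) → ℤ) :
    SFun (2*s) i v = v + (fun k => v i * onesp s k) := by
  funext j
  simp only [SFun, Pi.add_apply, onesp]
  rw [if_pos hi]
  by_cases h1 : (j:ℕ) = 0
  · rw [if_pos h1, if_pos h1]
    ring
  · rw [if_neg h1, if_neg h1]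
    ring

lemma Xc_SFun_zero {s : ℕ} (i : Fin (2*s)) (hi : (i:ℕ) = 0) (v : Fin (2*s) → ℤ) (j : ℕ) :
    Xc s j (SFun (2*s) i v)
      = Xc s j v + (if j < 2*s ∧ j % 2 = 1 then Xc s 0 v else 0) := by
  rw [SFun_eq_zero i hi v, Xc_add, Xc_mul j (v i) (onesp s), Xc_onesp]
  have hv : v i = Xc s 0 v := by
    have h0 : 0 < s := by have := i.isLt; omega
    rw [Xc_zero h0]
    congr 1
    exact Fin.ext (by simpa using hi)
  rw [hv]
  by_cases h : j < 2*s ∧ j % 2 = 1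
  · rw [if_pos h, if_pos h, mul_one]
  · rw [if_neg h, if_neg h, mul_zero]

lemma delta_odd {s : ℕ} (m : ℕ) (hm : 2*m+1 < 2*s) (v : Fin (2*s) → ℤ) :
    v (ipred ⟨2*m+1, hm⟩) - v ⟨2*m+1, hm⟩
      = ((if m = 0 then 0 else Pc s (m-1) v) - Pc s m v) := by
  rw [apply_eq_Xc v (ipred ⟨2*m+1, hm⟩), apply_eq_Xc v ⟨2*m+1, hm⟩]
  have h1 : ((ipred ⟨2*m+1, hm⟩ : Fin (2*s)) : ℕ) = 2*m := rfl
  have h2 : ((⟨2*m+1, hm⟩ : Fin (2*s)) : ℕ) = 2*m+1 := rfl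
  rw [h1, h2]
  rw [if_neg (by omega : ¬ 2*m+1 = 0)]
  have h3 : 2*m+1-1 = 2*m := by omega
  rw [h3]
  by_cases hm0 : m = 0
  · subst hm0
    rw [if_pos rfl, if_pos rfl]
    unfold Pc
    norm_num
  · rw [if_neg (by omega : ¬ 2*m = 0), if_neg hm0]
    unfold Pc
    have h4 : 2*(m-1)+1 = 2*m-1 := by omega
    rw [h4]
    have h5 : 2*m-1 = 2*m-1 := rfl
    ring

lemma delta_even {s : ℕ} (m : ℕ) (hm : 2*m+2 < 2*s) (v : Fin (2*s) → ℤ) :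
    v (ipred ⟨2*m+2, hm⟩) - v ⟨2*m+2, hm⟩ = Qc s m v := by
  rw [apply_eq_Xc v (ipred ⟨2*m+2, hm⟩), apply_eq_Xc v ⟨2*m+2, hm⟩]
  have h1 : ((ipred ⟨2*m+2, hm⟩ : Fin (2*s)) : ℕ) = 2*m+1 := rfl
  have h2 : ((⟨2*m+2, hm⟩ : Fin (2*s)) : ℕ) = 2*m+2 := rfl
  rw [h1, h2]
  rw [if_neg (by omega : ¬ 2*m+1 = 0), if_neg (by omega : ¬ 2*m+2 = 0)]
  have h3 : 2*m+1-1 = 2*m := by omega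
  have h4 : 2*m+2-1 = 2*m+1 := by omega
  rw [h3, h4]
  unfold Qc
  ring

lemma Qc_SFun_odd {s : ℕ} (m : ℕ) (hm : 2*m+1 < 2*s) (v : Fin (2*s) → ℤ) (j : ℕ) :
    Qc s j (SFun (2*s) ⟨2*m+1, hm⟩ v)
      = Qc s j v + ((if j = m then 1 else 0) - (if j+1 = m then 1 else 0))
          * ((if m = 0 then 0 else Pc s (m-1) v) - Pc s m v) := by
  unfold Qc
  rw [Xc_SFun_pos ⟨2*m+1, hm⟩ (by simp) v (2*j),
      Xc_SFun_pos ⟨2*m+1, hm⟩ (by simp) v (2*j+2)]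
  have h2 : ((⟨2*m+1, hm⟩ : Fin (2*s)) : ℕ) - 1 = 2*m := rfl
  rw [h2, delta_odd m hm v]
  by_cases hj : j = m
  · rw [if_pos (by omega : 2*j = 2*m), if_neg (by omega : ¬ 2*j+2 = 2*m),
      if_pos hj, if_neg (by omega : ¬ j+1 = m)]
    ring
  · rw [if_neg (by omega : ¬ 2*j = 2*m), if_neg hj]
    by_cases hj2 : j+1 = m
    · rw [if_pos (by omega : 2*j+2 = 2*m), if_pos hj2]
      ring
    · rw [if_neg (by omega : ¬ 2*j+2 = 2*m), if_neg hj2]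
      ring

lemma Pc_SFun_odd {s : ℕ} (m : ℕ) (hm : 2*m+1 < 2*s) (v : Fin (2*s) → ℤ) (j : ℕ) :
    Pc s j (SFun (2*s) ⟨2*m+1, hm⟩ v) = Pc s j v := by
  unfold Pc
  rw [Xc_SFun_pos ⟨2*m+1, hm⟩ (by simp) v (2*j+1)]
  have h2 : ((⟨2*m+1, hm⟩ : Fin (2*s)) : ℕ) - 1 = 2*m := rfl
  rw [h2, if_neg (by omega : ¬ 2*j+1 = 2*m)]
  ring

lemma Qc_SFun_even {s : ℕ} (m : ℕ) (hm : 2*m+2 < 2*s) (v : Fin (2*s) → ℤ) (j : ℕ) :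
    Qc s j (SFun (2*s) ⟨2*m+2, hm⟩ v) = Qc s j v := by
  unfold Qc
  rw [Xc_SFun_pos ⟨2*m+2, hm⟩ (by simp) v (2*j),
      Xc_SFun_pos ⟨2*m+2, hm⟩ (by simp) v (2*j+2)]
  have h2 : ((⟨2*m+2, hm⟩ : Fin (2*s)) : ℕ) - 1 = 2*m+1 := rfl
  rw [h2, if_neg (by omega : ¬ 2*j = 2*m+1), if_neg (by omega : ¬ 2*j+2 = 2*m+1)]
  ring

lemma Pc_SFun_even {s : ℕ} (m : ℕ) (hm : 2*m+2 < 2*s) (v : Fin (2*s) → ℤ) (j : ℕ) :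
    Pc s j (SFun (2*s) ⟨2*m+2, hm⟩ v)
      = Pc s j v + (if j = m then 1 else 0) * Qc s m v := by
  unfold Pc
  rw [Xc_SFun_pos ⟨2*m+2, hm⟩ (by simp) v (2*j+1)]
  have h2 : ((⟨2*m+2, hm⟩ : Fin (2*s)) : ℕ) - 1 = 2*m+1 := rfl
  rw [h2, delta_even m hm v]
  by_cases hj : j = m
  · rw [if_pos (by omega : 2*j+1 = 2*m+1), if_pos hj]
    ring
  · rw [if_neg (by omega : ¬ 2*j+1 = 2*m+1), if_neg hj]
    ring

lemma Qc_SFun_zero {s : ℕ} (h0 : 0 < 2*s) (v : Fin (2*s) → ℤ) (j : ℕ) :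
    Qc s j (SFun (2*s) ⟨0, h0⟩ v) = Qc s j v := by
  unfold Qc
  rw [Xc_SFun_zero ⟨0, h0⟩ rfl v (2*j), Xc_SFun_zero ⟨0, h0⟩ rfl v (2*j+2)]
  rw [if_neg (by omega : ¬ (2*j < 2*s ∧ 2*j % 2 = 1)),
    if_neg (by omega : ¬ (2*j+2 < 2*s ∧ (2*j+2) % 2 = 1))]
  ring

lemma Pc_SFun_zero {s : ℕ} (h0 : 0 < 2*s) (v : Fin (2*s) → ℤ) (j : ℕ) (hj : j < s) :
    Pc s j (SFun (2*s) ⟨0, h0⟩ v) = Pc s j v + Xc s 0 v := by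
  unfold Pc
  rw [Xc_SFun_zero ⟨0, h0⟩ rfl v (2*j+1)]
  rw [if_pos (by omega : 2*j+1 < 2*s ∧ (2*j+1) % 2 = 1)]

/-- telescoping: X₀ is the sum of the q's. -/
lemma Xc_two_mul_eq_sum {s : ℕ} (v : Fin (2*s) → ℤ) :
    ∀ d j, j + d = s → Xc s (2*j) v = ∑ t ∈ Finset.range d, Qc s (j+t) v := by
  intro d
  induction d with
  | zero => intro j hj; rw [Finset.sum_range_zero, Xc_out (by omega)]
  | succ d ih =>
    intro j hj
    have h1 : Xc s (2*j) v = Qc s j v + Xc s (2*(j+1)) v := by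
      unfold Qc; ring_nf
    rw [h1, ih (j+1) (by omega), Finset.sum_range_succ']
    simp only [Nat.add_zero]
    have : ∀ t, Qc s (j+1+t) v = Qc s (j+(t+1)) v := fun t => by
      have e : j+1+t = j+(t+1) := by omega
      rw [e]
    rw [Finset.sum_congr rfl (fun t _ => this t)]
    ring

lemma Xc_zero_eq_sum_q {s : ℕ} (v : Fin (2*s) → ℤ) :
    Xc s 0 v = ∑ i : Fin s, qcoord s i v := by
  have h := Xc_two_mul_eq_sum v s 0 (by omega)
  simp only [Nat.zero_add, Nat.mul_zero] at h
  rw [h, ← Fin.sum_univ_eq_sum_range (fun t => Qc s t v) s]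
  exact Finset.sum_congr rfl fun i _ => (qcoord_eq_Qc i v).symm

variable {s : ℕ}

/-- group of linear automorphisms of ℤ^{2s} -/
abbrev GE (s : ℕ) := (Fin (2*s) → ℤ) ≃ₗ[ℤ] (Fin (2*s) → ℤ)

def omc (cq cp : Fin s → ℤ) (v : Fin (2*s) → ℤ) : ℤ :=
  ∑ i : Fin s, (cp i * qcoord s i v - cq i * pcoord s i v)

/-- `g` acts on coordinates as the `t`-th power of the symplectic transvection
with coordinate vector `(cq, cp)`. -/
def TAct (g : GE s) (cq cp : Fin s → ℤ) (t : ℤ) : Prop :=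
  ∀ v, (∀ i, qcoord s i (g v) = qcoord s i v + t * omc cq cp v * cq i)
     ∧ (∀ i, pcoord s i (g v) = pcoord s i v + t * omc cq cp v * cp i)

lemma omc_apply {g : GE s} {cq cp t} (hg : TAct g cq cp t) (v : Fin (2*s) → ℤ) :
    omc cq cp (g v) = omc cq cp v := by
  unfold omc
  refine Finset.sum_congr rfl fun i _ => ?_
  rw [(hg v).1 i, (hg v).2 i]; ring

lemma TAct_one (cq cp : Fin s → ℤ) : TAct (1 : GE s) cq cp 0 := by
  intro v
  have h1 : (1 : GE s) v = v := rfl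
  rw [h1]
  constructor <;> intro i <;> ring

lemma TAct_mul {g h : GE s} {cq cp a b} (hg : TAct g cq cp a) (hh : TAct h cq cp b) :
    TAct (g * h) cq cp (a + b) := by
  intro v
  have h1 : (g * h) v = g (h v) := rfl
  rw [h1]
  constructor <;> intro i
  · rw [(hg (h v)).1 i, (hh v).1 i, omc_apply hh v]; ring
  · rw [(hg (h v)).2 i, (hh v).2 i, omc_apply hh v]; ring

lemma TAct_inv {g : GE s} {cq cp a} (hg : TAct g cq cp a) :
    TAct g⁻¹ cq cp (-a) := by
  intro v
  have h1 : g (g⁻¹ v) = v := g.apply_symm_apply v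
  have h2 : omc cq cp (g⁻¹ v) = omc cq cp v := by
    conv_rhs => rw [← h1]
    rw [omc_apply hg]
  constructor <;> intro i
  · have := (hg (g⁻¹ v)).1 i
    rw [h1, h2] at this
    linarith [this]
  · have := (hg (g⁻¹ v)).2 i
    rw [h1, h2] at this
    linarith [this]

lemma TAct_zpow {g : GE s} {cq cp} (hg : TAct g cq cp 1) (t : ℤ) :
    TAct (g ^ t) cq cp t := by
  induction t using Int.induction_on with
  | zero => rw [zpow_zero]; exact TAct_one cq cp
  | succ n ih =>
    have h1 : g ^ ((n : ℤ) + 1) = g ^ (n : ℤ) * g := by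
      rw [zpow_add_one]
    rw [h1]
    exact TAct_mul ih hg
  | pred n ih =>
    have h1 : g ^ (-(n : ℤ) - 1) = g ^ (-(n : ℤ)) * g⁻¹ := by
      rw [zpow_sub_one]
    rw [h1]
    have := TAct_mul ih (TAct_inv hg)
    simpa [sub_eq_add_neg] using this

lemma TAct_fix {g : GE s} {cq cp t} (hg : TAct g cq cp t) {x : Fin (2*s) → ℤ}
    (hx : omc cq cp x = 0) : g x = x := by
  apply coords_det (s := s)
  · intro m
    by_cases hm : m < s
    · rw [← qcoord_eq_Qc ⟨m, hm⟩, ← qcoord_eq_Qc ⟨m, hm⟩, (hg x).1 ⟨m, hm⟩, hx]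
      ring
    · rw [Qc_out (by omega), Qc_out (by omega)]
  · intro m
    by_cases hm : m < s
    · rw [← pcoord_eq_Pc ⟨m, hm⟩, ← pcoord_eq_Pc ⟨m, hm⟩, (hg x).2 ⟨m, hm⟩, hx]
      ring
    · rw [Pc_out (by omega), Pc_out (by omega)]

/-- TAct maps preserve J. -/
lemma TAct_spj {g : GE s} {cq cp t} (hg : TAct g cq cp t) :
    ∀ v w, Jform (g v) (g w) = Jform v w := by
  intro v w
  rw [Jform_pairs, Jform_pairs]
  have key : ∀ i : Fin s,
      qcoord s i (g v) * pcoord s i (g w) - pcoord s i (g v) * qcoord s i (g w)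
      = (qcoord s i v * pcoord s i w - pcoord s i v * qcoord s i w)
        + (t * omc cq cp w) * (qcoord s i v * cp i - pcoord s i v * cq i)
        + (t * omc cq cp v) * (cq i * pcoord s i w - cp i * qcoord s i w) := by
    intro i
    rw [(hg v).1 i, (hg v).2 i, (hg w).1 i, (hg w).2 i]
    ring
  calc (∑ i : Fin s, (qcoord s i (g v) * pcoord s i (g w)
          - pcoord s i (g v) * qcoord s i (g w)))
      = ∑ i : Fin s, ((qcoord s i v * pcoord s i w - pcoord s i v * qcoord s i w)
        + (t * omc cq cp w) * (qcoord s i v * cp i - pcoord s i v * cq i)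
        + (t * omc cq cp v) * (cq i * pcoord s i w - cp i * qcoord s i w)) :=
        Finset.sum_congr rfl fun i _ => key i
    _ = (∑ i : Fin s, (qcoord s i v * pcoord s i w - pcoord s i v * qcoord s i w))
        + ((∑ i : Fin s, ((t * omc cq cp w) * (qcoord s i v * cp i - pcoord s i v * cq i)))
        + (∑ i : Fin s, ((t * omc cq cp v) * (cq i * pcoord s i w - cp i * qcoord s i w)))) := by
        rw [← Finset.sum_add_distrib, ← Finset.sum_add_distrib]
        refine Finset.sum_congr rfl fun i _ => ?_
        ring
    _ = _ := by
        rw [← Finset.mul_sum, ← Finset.mul_sum]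
        have h1 : (∑ i : Fin s, (qcoord s i v * cp i - pcoord s i v * cq i))
            = omc cq cp v := by
          unfold omc
          refine Finset.sum_congr rfl fun i _ => ?_
          ring
        have h2 : (∑ i : Fin s, (cq i * pcoord s i w - cp i * qcoord s i w))
            = - omc cq cp w := by
          unfold omc
          rw [← Finset.sum_neg_distrib]
          refine Finset.sum_congr rfl fun i _ => ?_
          ring
        rw [h1, h2]
        ring

lemma Sgen_apply (n : ℕ) (i : Fin n) (v : Fin n → ℤ) : Sgen n i v = SFun n i v := rfl

/-- coordinate vector of the odd generators -/
def cqOdd (s m : ℕ) : Fin s → ℤ :=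
  fun i => (if (i:ℕ) = m then 1 else 0) - (if (i:ℕ)+1 = m then 1 else 0)

/-- coordinate vector of the even generators -/
def cpEven (s m : ℕ) : Fin s → ℤ := fun i => if (i:ℕ) = m then 1 else 0

lemma sum_if_eq (f : Fin s → ℤ) (m : ℕ) (hm : m < s) :
    (∑ i : Fin s, if (i:ℕ) = m then f i else 0) = f ⟨m, hm⟩ := by
  rw [Finset.sum_eq_single (⟨m, hm⟩ : Fin s)]
  · rw [if_pos rfl]
  · intro b _ hb
    rw [if_neg (fun hc => hb (Fin.ext hc))]
  · intro hc; exact absurd (Finset.mem_univ _) hc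

lemma omc_odd (m : ℕ) (hm : m < s) (v : Fin (2*s) → ℤ) :
    omc (cqOdd s m) (fun _ => 0) v
      = (if m = 0 then 0 else Pc s (m-1) v) - Pc s m v := by
  unfold omc cqOdd
  have key : ∀ i : Fin s,
      ((0:ℤ) * qcoord s i v
        - ((if (i:ℕ) = m then 1 else 0) - (if (i:ℕ)+1 = m then 1 else 0)) * pcoord s i v)
      = (if (i:ℕ) = m then -pcoord s i v else 0)
        + (if (i:ℕ)+1 = m then pcoord s i v else 0) := by
    intro i
    by_cases h1 : (i:ℕ) = m
    · rw [if_pos h1, if_pos h1, if_neg (by omega), if_neg (by omega)]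
      ring
    · rw [if_neg h1, if_neg h1]
      by_cases h2 : (i:ℕ)+1 = m
      · rw [if_pos h2, if_pos h2]; ring
      · rw [if_neg h2, if_neg h2]; ring
  rw [Finset.sum_congr rfl fun i _ => key i, Finset.sum_add_distrib]
  have h1 : (∑ i : Fin s, if (i:ℕ) = m then -pcoord s i v else 0)
      = -pcoord s ⟨m, hm⟩ v := sum_if_eq (fun i => -pcoord s i v) m hm
  rw [h1]
  by_cases hm0 : m = 0
  · subst hm0
    have h2 : (∑ i : Fin s, if (i:ℕ)+1 = 0 then pcoord s i v else 0) = 0 := by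
      rw [Finset.sum_eq_zero]
      intro i _
      rw [if_neg (by omega)]
    rw [h2, if_pos rfl, pcoord_eq_Pc]
    ring
  · have h2 : (∑ i : Fin s, if (i:ℕ)+1 = m then pcoord s i v else 0)
        = Pc s (m-1) v := by
      have hms : m - 1 < s := by omega
      have key2 : ∀ i : Fin s, (if (i:ℕ)+1 = m then pcoord s i v else 0)
          = (if (i:ℕ) = m-1 then pcoord s i v else 0) := by
        intro i
        by_cases h : (i:ℕ)+1 = m
        · rw [if_pos h, if_pos (by omega)]
        · rw [if_neg h, if_neg (by omega)]
      rw [Finset.sum_congr rfl fun i _ => key2 i, sum_if_eq _ _ hms, pcoord_eq_Pc]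
    rw [h2, if_neg hm0, pcoord_eq_Pc]
    ring

lemma omc_even (m : ℕ) (hm : m < s) (v : Fin (2*s) → ℤ) :
    omc (fun _ => 0) (cpEven s m) v = Qc s m v := by
  unfold omc cpEven
  have key : ∀ i : Fin s,
      ((if (i:ℕ) = m then (1:ℤ) else 0) * qcoord s i v - 0 * pcoord s i v)
      = (if (i:ℕ) = m then qcoord s i v else 0) := by
    intro i
    by_cases h : (i:ℕ) = m
    · rw [if_pos h, if_pos h]; ring
    · rw [if_neg h, if_neg h]; ring
  rw [Finset.sum_congr rfl fun i _ => key i, sum_if_eq _ _ hm, qcoord_eq_Qc]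

lemma omc_ones (v : Fin (2*s) → ℤ) :
    omc (fun _ => 0) (fun _ => (1:ℤ)) v = Xc s 0 v := by
  unfold omc
  rw [Xc_zero_eq_sum_q]
  refine Finset.sum_congr rfl fun i _ => ?_
  ring

lemma TAct_Sgen_odd (m : ℕ) (hm : 2*m+1 < 2*s) :
    TAct (Sgen (2*s) ⟨2*m+1, hm⟩) (cqOdd s m) (fun _ => 0) 1 := by
  intro v
  constructor <;> intro i
  · rw [Sgen_apply, qcoord_eq_Qc, qcoord_eq_Qc, Qc_SFun_odd m hm v (i:ℕ),
      omc_odd m (by omega) v]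
    unfold cqOdd
    ring
  · rw [Sgen_apply, pcoord_eq_Pc, pcoord_eq_Pc, Pc_SFun_odd m hm v (i:ℕ)]
    ring

lemma TAct_Sgen_even (m : ℕ) (hm : 2*m+2 < 2*s) :
    TAct (Sgen (2*s) ⟨2*m+2, hm⟩) (fun _ => 0) (cpEven s m) 1 := by
  intro v
  constructor <;> intro i
  · rw [Sgen_apply, qcoord_eq_Qc, qcoord_eq_Qc, Qc_SFun_even m hm v (i:ℕ)]
    ring
  · rw [Sgen_apply, pcoord_eq_Pc, pcoord_eq_Pc, Pc_SFun_even m hm v (i:ℕ),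
      omc_even m (by omega) v]
    unfold cpEven
    ring

lemma TAct_Sgen_zero (h0 : 0 < 2*s) :
    TAct (Sgen (2*s) ⟨0, h0⟩) (fun _ => 0) (fun _ => 1) 1 := by
  intro v
  constructor <;> intro i
  · rw [Sgen_apply, qcoord_eq_Qc, qcoord_eq_Qc, Qc_SFun_zero h0 v (i:ℕ)]
    ring
  · rw [Sgen_apply, pcoord_eq_Pc, pcoord_eq_Pc, Pc_SFun_zero h0 v (i:ℕ) i.isLt,
      omc_ones]
    ring

/-- every basic generator has a transvection coordinate action -/
lemma Sgen_exists_TAct (i : Fin (2*s)) :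
    ∃ cq cp, TAct (Sgen (2*s) i) cq cp 1 := by
  rcases Nat.eq_zero_or_pos (i:ℕ) with h0 | hpos
  · have hi : i = ⟨0, by have := i.isLt; omega⟩ := Fin.ext h0
    rw [hi]
    exact ⟨_, _, TAct_Sgen_zero _⟩
  · rcases Nat.even_or_odd (i:ℕ) with ⟨m, hm⟩ | ⟨m, hm⟩
    · obtain ⟨m', hm'⟩ : ∃ m', (i:ℕ) = 2*m'+2 := ⟨m-1, by omega⟩
      have hlt : 2*m'+2 < 2*s := hm' ▸ i.isLt
      have hi : i = ⟨2*m'+2, hlt⟩ := Fin.ext hm'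
      rw [hi]
      exact ⟨_, _, TAct_Sgen_even m' hlt⟩
    · have hm2 : (i:ℕ) = 2*m+1 := by omega
      have hlt : 2*m+1 < 2*s := hm2 ▸ i.isLt
      have hi : i = ⟨2*m+1, hlt⟩ := Fin.ext hm2
      rw [hi]
      exact ⟨_, _, TAct_Sgen_odd m hlt⟩

variable {s : ℕ}

lemma mem_SpJ {n : ℕ} (g : (Fin n → ℤ) ≃ₗ[ℤ] (Fin n → ℤ)) :
    g ∈ SpJ n ↔ ∀ v w, Jform (g v) (g w) = Jform v w := Iff.rfl

/-- the subgroup generated by `𝒢_{2s}` and `τ`. -/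
def Hgrp (s : ℕ) (τ : GE s) : Subgroup (GE s) :=
  Subgroup.closure (↑(Gn (2*s)) ∪ {τ})

lemma Sgen_mem_Hgrp (τ : GE s) (i : Fin (2*s)) : Sgen (2*s) i ∈ Hgrp s τ :=
  Subgroup.subset_closure (Or.inl (Subgroup.subset_closure ⟨i, rfl⟩))

lemma tau_mem_Hgrp (τ : GE s) : τ ∈ Hgrp s τ :=
  Subgroup.subset_closure (Or.inr rfl)

section tau

open Fin.NatCast Fin.CommRing

variable [NeZero s] {τ : GE s}
variable (hq : ∀ (v : Fin (2 * s) → ℤ) (i j : Fin s), (j : ℕ) = ((i : ℕ) + 1) % s →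
        qcoord s j (τ v) = qcoord s i v)
variable (hp : ∀ (v : Fin (2 * s) → ℤ) (i j : Fin s), (j : ℕ) = ((i : ℕ) + 1) % s →
        pcoord s j (τ v) = pcoord s i v)

lemma val_fin_succ (i : Fin s) : ((i+1 : Fin s) : ℕ) = ((i:ℕ)+1) % s := by
  rw [Fin.val_add, Fin.val_one']
  conv_rhs => rw [Nat.add_mod]
  rw [Nat.mod_eq_of_lt i.isLt]

include hq in
lemma q_tau (v : Fin (2*s) → ℤ) (j : Fin s) :
    qcoord s j (τ v) = qcoord s (j - 1) v := by
  have := hq v (j - 1) ((j-1) + 1) (val_fin_succ (j-1))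
  rwa [sub_add_cancel] at this

include hp in
lemma p_tau (v : Fin (2*s) → ℤ) (j : Fin s) :
    pcoord s j (τ v) = pcoord s (j - 1) v := by
  have := hp v (j - 1) ((j-1) + 1) (val_fin_succ (j-1))
  rwa [sub_add_cancel] at this

include hq in
lemma q_tau_pow (K : ℕ) (v : Fin (2*s) → ℤ) (j : Fin s) :
    qcoord s j ((τ^K : GE s) v) = qcoord s (j - (K : Fin s)) v := by
  induction K generalizing v j with
  | zero => simp
  | succ K ih =>
    have h1 : (τ^(K+1) : GE s) v = (τ^K : GE s) (τ v) := by
      rw [pow_succ]; rfl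
    rw [h1, ih (τ v) j, q_tau hq v]
    congr 1
    push_cast
    ring

include hp in
lemma p_tau_pow (K : ℕ) (v : Fin (2*s) → ℤ) (j : Fin s) :
    pcoord s j ((τ^K : GE s) v) = pcoord s (j - (K : Fin s)) v := by
  induction K generalizing v j with
  | zero => simp
  | succ K ih =>
    have h1 : (τ^(K+1) : GE s) v = (τ^K : GE s) (τ v) := by
      rw [pow_succ]; rfl
    rw [h1, ih (τ v) j, p_tau hp v]
    congr 1
    push_cast
    ring

include hq in
lemma q_tau_pow_inv (K : ℕ) (v : Fin (2*s) → ℤ) (j : Fin s) :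
    qcoord s j (((τ^K : GE s))⁻¹ v) = qcoord s (j + (K : Fin s)) v := by
  have h1 : (τ^K : GE s) ((τ^K : GE s)⁻¹ v) = v := LinearEquiv.apply_symm_apply _ v
  have h2 := q_tau_pow hq K ((τ^K : GE s)⁻¹ v) (j + (K : Fin s))
  rw [h1, add_sub_cancel_right] at h2
  exact h2.symm

include hp in
lemma p_tau_pow_inv (K : ℕ) (v : Fin (2*s) → ℤ) (j : Fin s) :
    pcoord s j (((τ^K : GE s))⁻¹ v) = pcoord s (j + (K : Fin s)) v := by
  have h1 : (τ^K : GE s) ((τ^K : GE s)⁻¹ v) = v := LinearEquiv.apply_symm_apply _ v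
  have h2 := p_tau_pow hp K ((τ^K : GE s)⁻¹ v) (j + (K : Fin s))
  rw [h1, add_sub_cancel_right] at h2
  exact h2.symm

include hq hp in
lemma omc_shift (cq cp : Fin s → ℤ) (K : ℕ) (v : Fin (2*s) → ℤ) :
    omc (fun i => cq (i - (K : Fin s))) (fun i => cp (i - (K : Fin s))) v
      = omc cq cp ((τ^K : GE s)⁻¹ v) := by
  unfold omc
  rw [← Equiv.sum_comp (Equiv.addRight ((K : Fin s))) (fun i =>
    (cp (i - (K : Fin s)) * qcoord s i v - cq (i - (K : Fin s)) * pcoord s i v))]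
  refine Finset.sum_congr rfl fun j _ => ?_
  have e1 : Equiv.addRight ((K : Fin s)) j = j + (K : Fin s) := rfl
  rw [e1, add_sub_cancel_right, q_tau_pow_inv hq, p_tau_pow_inv hp]

include hq hp in
lemma TAct_conj (K : ℕ) {g : GE s} {cq cp : Fin s → ℤ} {t : ℤ} (hg : TAct g cq cp t) :
    TAct ((τ^K : GE s) * g * (τ^K : GE s)⁻¹)
      (fun i => cq (i - (K : Fin s))) (fun i => cp (i - (K : Fin s))) t := by
  intro v
  have happ : ((τ^K : GE s) * g * (τ^K : GE s)⁻¹) v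
      = (τ^K : GE s) (g ((τ^K : GE s)⁻¹ v)) := rfl
  constructor <;> intro i
  · rw [happ, q_tau_pow hq K _ i, (hg _).1 (i - (K : Fin s)),
      q_tau_pow_inv hq, sub_add_cancel, omc_shift hq hp]
  · rw [happ, p_tau_pow hp K _ i, (hg _).2 (i - (K : Fin s)),
      p_tau_pow_inv hp, sub_add_cancel, omc_shift hq hp]

include hq hp in
/-- τ preserves J (first conclusion of the theorem). -/
lemma tau_spj : ∀ v w, Jform (τ v) (τ w) = Jform v w := by
  intro v w
  rw [Jform_pairs, Jform_pairs]
  rw [← Equiv.sum_comp (Equiv.addRight (1 : Fin s)) (fun m =>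
    qcoord s m (τ v) * pcoord s m (τ w) - pcoord s m (τ v) * qcoord s m (τ w))]
  refine Finset.sum_congr rfl fun j _ => ?_
  have e1 : Equiv.addRight (1 : Fin s) j = j + 1 := rfl
  rw [e1, q_tau hq, p_tau hp, q_tau hq, p_tau hp, add_sub_cancel_right]

end tau

/-- single coordinate vectors -/
def cqSing (k : Fin s) : Fin s → ℤ := fun i => if i = k then 1 else 0

lemma omc_cqSing (k : Fin s) (v : Fin (2*s) → ℤ) :
    omc (cqSing k) (fun _ => 0) v = - pcoord s k v := by
  unfold omc cqSing
  have key : ∀ i : Fin s, ((0:ℤ) * qcoord s i v - (if i = k then (1:ℤ) else 0) * pcoord s i v)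
      = (if (i:ℕ) = (k:ℕ) then -pcoord s i v else 0) := by
    intro i
    by_cases h : i = k
    · rw [if_pos h, if_pos (by rw [h])]; ring
    · rw [if_neg h, if_neg (fun hc => h (Fin.ext hc))]; ring
  rw [Finset.sum_congr rfl fun i _ => key i,
    sum_if_eq (fun i => -pcoord s i v) (k:ℕ) k.isLt]

lemma omc_cpSing (k : Fin s) (v : Fin (2*s) → ℤ) :
    omc (fun _ => 0) (cqSing k) v = qcoord s k v := by
  unfold omc cqSing
  have key : ∀ i : Fin s, ((if i = k then (1:ℤ) else 0) * qcoord s i v - 0 * pcoord s i v)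
      = (if (i:ℕ) = (k:ℕ) then qcoord s i v else 0) := by
    intro i
    by_cases h : i = k
    · rw [if_pos h, if_pos (by rw [h])]; ring
    · rw [if_neg h, if_neg (fun hc => h (Fin.ext hc))]; ring
  rw [Finset.sum_congr rfl fun i _ => key i,
    sum_if_eq (fun i => qcoord s i v) (k:ℕ) k.isLt]

variable {s : ℕ}

lemma cqOdd_zero [NeZero s] : cqOdd s 0 = cqSing (0 : Fin s) := by
  funext i
  unfold cqOdd cqSing
  have h0 : ((0 : Fin s) : ℕ) = 0 := rfl
  by_cases h : i = 0
  · rw [if_pos (by rw [h, h0]), if_neg (by omega), if_pos h]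
    ring
  · rw [if_neg (fun hc => h (Fin.ext (by rw [hc, h0]))), if_neg (by omega), if_neg h]
    ring

lemma cpEven_zero [NeZero s] : cpEven s 0 = cqSing (0 : Fin s) := by
  funext i
  unfold cpEven cqSing
  by_cases h : i = 0
  · rw [if_pos (show (i:ℕ) = 0 by rw [h]; rfl), if_pos h]
  · rw [if_neg (show ¬ (i:ℕ) = 0 from fun hc => h (Fin.ext hc)), if_neg h]

lemma cqSing_shift [NeZero s] (k : Fin s) :
    (fun i => cqSing (0 : Fin s) (i - k)) = cqSing k := by
  funext i
  unfold cqSing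
  by_cases h : i = k
  · rw [if_pos (by rw [h, sub_self]), if_pos h]
  · rw [if_neg (fun hc => h (by rwa [sub_eq_zero] at hc)), if_neg h]

section moves

variable [NeZero s] {τ : GE s}
variable (hq : ∀ (v : Fin (2 * s) → ℤ) (i j : Fin s), (j : ℕ) = ((i : ℕ) + 1) % s →
        qcoord s j (τ v) = qcoord s i v)
variable (hp : ∀ (v : Fin (2 * s) → ℤ) (i j : Fin s), (j : ℕ) = ((i : ℕ) + 1) % s →
        pcoord s j (τ v) = pcoord s i v)

include hq hp in
lemma moveA (k : Fin s) (t : ℤ) :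
    ∃ g ∈ Hgrp s τ, TAct g (cqSing k) (fun _ => 0) t := by
  have hs : 0 < s := NeZero.pos s
  have h1 : 2*0+1 < 2*s := by omega
  have hbase := TAct_Sgen_odd (s := s) 0 h1
  rw [cqOdd_zero] at hbase
  have hpow := TAct_zpow hbase t
  have hconj := TAct_conj hq hp (k:ℕ) hpow
  rw [Fin.cast_val_eq_self k, cqSing_shift k] at hconj
  refine ⟨_, ?_, hconj⟩
  exact mul_mem (mul_mem (pow_mem (tau_mem_Hgrp τ) _)
    (zpow_mem (Sgen_mem_Hgrp τ _) _)) (inv_mem (pow_mem (tau_mem_Hgrp τ) _))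

include hq hp in
lemma moveB (k : Fin s) (t : ℤ) :
    ∃ g ∈ Hgrp s τ, TAct g (fun _ => 0) (cqSing k) t := by
  have hs : 0 < s := NeZero.pos s
  have hbase : ∃ g ∈ Hgrp s τ, TAct g (fun _ => 0) (cqSing (0 : Fin s)) 1 := by
    by_cases hs2 : 2 ≤ s
    · have h1 : 2*0+2 < 2*s := by omega
      have hb := TAct_Sgen_even (s := s) 0 h1
      rw [cpEven_zero] at hb
      exact ⟨_, Sgen_mem_Hgrp τ _, hb⟩
    · have hs1 : s = 1 := by omega
      have h1 : 0 < 2*s := by omega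
      have hb := TAct_Sgen_zero (s := s) h1
      have he : (fun _ : Fin s => (1:ℤ)) = cqSing (0 : Fin s) := by
        funext i
        have : i = 0 := by
          apply Fin.ext
          have := i.isLt
          omega
        rw [this]
        unfold cqSing
        rw [if_pos rfl]
      rw [he] at hb
      exact ⟨_, Sgen_mem_Hgrp τ _, hb⟩
  obtain ⟨b, hbH, hb⟩ := hbase
  have hpow := TAct_zpow hb t
  have hconj := TAct_conj hq hp (k:ℕ) hpow
  rw [Fin.cast_val_eq_self k, cqSing_shift k] at hconj
  refine ⟨_, ?_, hconj⟩
  exact mul_mem (mul_mem (pow_mem (tau_mem_Hgrp τ) _)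
    (zpow_mem hbH _)) (inv_mem (pow_mem (tau_mem_Hgrp τ) _))

omit [NeZero s] in
lemma moveC (τ : GE s) (m : ℕ) (hm1 : 1 ≤ m) (hms : m < s) (t : ℤ) :
    ∃ g ∈ Hgrp s τ, TAct g (cqOdd s m) (fun _ => 0) t := by
  have h1 : 2*m+1 < 2*s := by omega
  exact ⟨_, zpow_mem (Sgen_mem_Hgrp τ ⟨2*m+1, h1⟩) t,
    TAct_zpow (TAct_Sgen_odd m h1) t⟩

include hq hp in
lemma Hgrp_le_SpJ : Hgrp s τ ≤ SpJ (2*s) := by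
  apply Subgroup.closure_le (SpJ (2*s)) |>.mpr
  rintro x (hx | hx)
  · have hGn : Gn (2*s) ≤ SpJ (2*s) := by
      apply Subgroup.closure_le (SpJ (2*s)) |>.mpr
      rintro y ⟨i, rfl⟩
      obtain ⟨cq, cp, hact⟩ := Sgen_exists_TAct i
      exact TAct_spj hact
    exact hGn hx
  · rw [Set.mem_singleton_iff] at hx
    subst hx
    exact tau_spj hq hp

end moves

variable {s : ℕ}

/-- A "move": an element of H supported (on coordinates) in the pair-set S. -/
def Mv (τ : GE s) (S : Finset (Fin s)) (g : GE s) : Prop :=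
  g ∈ Hgrp s τ ∧
  (∀ z j, j ∉ S → qcoord s j (g z) = qcoord s j z ∧ pcoord s j (g z) = pcoord s j z) ∧
  (∀ x, (∀ j, j ∈ S → qcoord s j x = 0 ∧ pcoord s j x = 0) → g x = x)

def Reach (τ : GE s) (S : Finset (Fin s)) (v w : Fin (2*s) → ℤ) : Prop :=
  ∃ g, Mv τ S g ∧ g v = w

lemma Reach_refl (τ : GE s) (S : Finset (Fin s)) (v : Fin (2*s) → ℤ) :
    Reach τ S v v := by
  refine ⟨1, ⟨one_mem _, fun z j _ => ⟨rfl, rfl⟩, fun x _ => rfl⟩, rfl⟩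

lemma Reach_trans {τ : GE s} {S : Finset (Fin s)} {v w u : Fin (2*s) → ℤ}
    (h1 : Reach τ S v w) (h2 : Reach τ S w u) : Reach τ S v u := by
  obtain ⟨g1, ⟨hg1H, hg1c, hg1f⟩, hg1⟩ := h1
  obtain ⟨g2, ⟨hg2H, hg2c, hg2f⟩, hg2⟩ := h2
  refine ⟨g2 * g1, ⟨mul_mem hg2H hg1H, ?_, ?_⟩, ?_⟩
  · intro z j hj
    have happ : (g2 * g1) z = g2 (g1 z) := rfl
    rw [happ]
    exact ⟨((hg2c (g1 z) j hj).1).trans (hg1c z j hj).1,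
      ((hg2c (g1 z) j hj).2).trans (hg1c z j hj).2⟩
  · intro x hx
    have happ : (g2 * g1) x = g2 (g1 x) := rfl
    rw [happ, hg1f x hx, hg2f x hx]
  · have happ : (g2 * g1) v = g2 (g1 v) := rfl
    rw [happ, hg1, hg2]

lemma Reach_mono {τ : GE s} {S S' : Finset (Fin s)} (hss : S ⊆ S')
    {v w : Fin (2*s) → ℤ} (h : Reach τ S v w) : Reach τ S' v w := by
  obtain ⟨g, ⟨hH, hc, hf⟩, hgv⟩ := h
  refine ⟨g, ⟨hH, fun z j hj => hc z j (fun hmem => hj (hss hmem)), ?_⟩, hgv⟩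
  intro x hx
  exact hf x (fun j hj => hx j (hss hj))

lemma Reach_coords {τ : GE s} {S : Finset (Fin s)} {v w : Fin (2*s) → ℤ}
    (h : Reach τ S v w) (j : Fin s) (hj : j ∉ S) :
    qcoord s j w = qcoord s j v ∧ pcoord s j w = pcoord s j v := by
  obtain ⟨g, ⟨hH, hc, hf⟩, hgv⟩ := h
  rw [← hgv]
  exact hc v j hj

lemma TAct_Mv {τ : GE s} {g : GE s} {cq cp : Fin s → ℤ} {t : ℤ} {S : Finset (Fin s)}
    (hH : g ∈ Hgrp s τ) (hsupp : ∀ j, j ∉ S → cq j = 0 ∧ cp j = 0)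
    (hact : TAct g cq cp t) : Mv τ S g := by
  refine ⟨hH, ?_, ?_⟩
  · intro z j hj
    constructor
    · rw [(hact z).1 j, (hsupp j hj).1]; ring
    · rw [(hact z).2 j, (hsupp j hj).2]; ring
  · intro x hx
    apply TAct_fix hact
    unfold omc
    apply Finset.sum_eq_zero
    intro i _
    by_cases hi : i ∈ S
    · rw [(hx i hi).1, (hx i hi).2]; ring
    · rw [(hsupp i hi).1, (hsupp i hi).2]; ring

section steps

variable [NeZero s] {τ : GE s}
variable (hq : ∀ (v : Fin (2 * s) → ℤ) (i j : Fin s), (j : ℕ) = ((i : ℕ) + 1) % s →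
        qcoord s j (τ v) = qcoord s i v)
variable (hp : ∀ (v : Fin (2 * s) → ℤ) (i j : Fin s), (j : ℕ) = ((i : ℕ) + 1) % s →
        pcoord s j (τ v) = pcoord s i v)

include hq hp in
lemma stepA (k : Fin s) (t : ℤ) (v : Fin (2*s) → ℤ) :
    ∃ w, Reach τ {k} v w ∧ qcoord s k w = qcoord s k v + t * pcoord s k v
      ∧ pcoord s k w = pcoord s k v := by
  obtain ⟨g, hH, hact⟩ := moveA hq hp k (-t)
  have hsupp : ∀ j, j ∉ ({k} : Finset (Fin s)) → cqSing k j = 0 ∧ (fun _ : Fin s => (0:ℤ)) j = 0 := by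
    intro j hj
    rw [Finset.mem_singleton] at hj
    exact ⟨if_neg hj, rfl⟩
  refine ⟨g v, ⟨g, TAct_Mv hH hsupp hact, rfl⟩, ?_, ?_⟩
  · rw [(hact v).1 k, omc_cqSing]
    unfold cqSing
    rw [if_pos rfl]
    ring
  · rw [(hact v).2 k]
    ring

include hq hp in
lemma stepB (k : Fin s) (t : ℤ) (v : Fin (2*s) → ℤ) :
    ∃ w, Reach τ {k} v w ∧ qcoord s k w = qcoord s k v
      ∧ pcoord s k w = pcoord s k v + t * qcoord s k v := by
  obtain ⟨g, hH, hact⟩ := moveB hq hp k t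
  have hsupp : ∀ j, j ∉ ({k} : Finset (Fin s)) → (fun _ : Fin s => (0:ℤ)) j = 0 ∧ cqSing k j = 0 := by
    intro j hj
    rw [Finset.mem_singleton] at hj
    exact ⟨rfl, if_neg hj⟩
  refine ⟨g v, ⟨g, TAct_Mv hH hsupp hact, rfl⟩, ?_, ?_⟩
  · rw [(hact v).1 k]
    ring
  · rw [(hact v).2 k, omc_cpSing]
    unfold cqSing
    rw [if_pos rfl]
    ring

omit [NeZero s] in
lemma stepC (a b : Fin s) (hab : (b:ℕ)+1 = (a:ℕ)) (t : ℤ) (v : Fin (2*s) → ℤ) :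
    ∃ w, Reach τ {a, b} v w
      ∧ qcoord s a w = qcoord s a v + t * (pcoord s b v - pcoord s a v)
      ∧ qcoord s b w = qcoord s b v - t * (pcoord s b v - pcoord s a v)
      ∧ (∀ j : Fin s, pcoord s j w = pcoord s j v) := by
  have hm1 : 1 ≤ (a:ℕ) := by omega
  obtain ⟨g, hH, hact⟩ := moveC τ (a:ℕ) hm1 a.isLt t
  have homc : omc (cqOdd s (a:ℕ)) (fun _ => 0) v
      = pcoord s b v - pcoord s a v := by
    rw [omc_odd (a:ℕ) a.isLt v, if_neg (by omega), pcoord_eq_Pc, pcoord_eq_Pc]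
    have e1 : ((b:ℕ) : ℕ) = (a:ℕ) - 1 := by omega
    rw [e1]
  have hsupp : ∀ j, j ∉ ({a, b} : Finset (Fin s)) →
      cqOdd s (a:ℕ) j = 0 ∧ (fun _ : Fin s => (0:ℤ)) j = 0 := by
    intro j hj
    rw [Finset.mem_insert, Finset.mem_singleton] at hj
    push_neg at hj
    have h1 : ¬ (j:ℕ) = (a:ℕ) := fun hc => hj.1 (Fin.ext hc)
    have h2 : ¬ (j:ℕ)+1 = (a:ℕ) :=
      fun hc => hj.2 (Fin.ext (show (j:ℕ) = (b:ℕ) by omega))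
    unfold cqOdd
    rw [if_neg h1, if_neg h2]
    exact ⟨by ring, rfl⟩
  refine ⟨g v, ⟨g, TAct_Mv hH hsupp hact, rfl⟩, ?_, ?_, ?_⟩
  · rw [(hact v).1 a, homc]
    unfold cqOdd
    rw [if_pos rfl, if_neg (show ¬ ((a:ℕ)+1 = (a:ℕ)) by omega)]
    ring
  · rw [(hact v).1 b, homc]
    unfold cqOdd
    rw [if_neg (show ¬ ((b:ℕ) = (a:ℕ)) by omega), if_pos hab]
    ring
  · intro j
    rw [(hact v).2 j]
    ring

lemma natAbs_emod_lt (a b : ℤ) (hb : b ≠ 0) : (a % b).natAbs < b.natAbs := by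
  have h1 : 0 ≤ a % b := Int.emod_nonneg a hb
  have h2 : a % b < |b| := by rw [Int.abs_eq_natAbs]; exact Int.emod_lt a hb
  have h3 : |b| = (b.natAbs : ℤ) := Int.abs_eq_natAbs b
  omega

include hq hp in
lemma pair_euclid (k : Fin s) : ∀ N : ℕ, ∀ v : Fin (2*s) → ℤ,
    (pcoord s k v).natAbs ≤ N →
    ∃ w, Reach τ {k} v w ∧ pcoord s k w = 0
      ∧ qcoord s k w ∣ qcoord s k v ∧ qcoord s k w ∣ pcoord s k v := by
  intro N
  induction N with
  | zero =>
    intro v hv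
    have hP : pcoord s k v = 0 := by
      have := Int.natAbs_eq_zero.mp (Nat.le_zero.mp hv)
      exact this
    exact ⟨v, Reach_refl τ _ v, hP, dvd_refl _, hP ▸ dvd_zero _⟩
  | succ N ih =>
    intro v hv
    by_cases hP : pcoord s k v = 0
    · exact ⟨v, Reach_refl τ _ v, hP, dvd_refl _, hP ▸ dvd_zero _⟩
    · set Q := qcoord s k v with hQdef
      set P := pcoord s k v with hPdef
      obtain ⟨w1, hr1, hq1, hp1⟩ := stepA hq hp k (-(Q / P)) v
      have hq1' : qcoord s k w1 = Q % P := by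
        rw [hq1, Int.emod_def]; ring
      set R := Q % P with hRdef
      by_cases hR : R = 0
      · -- P divides Q; transfer (R,P) = (0,P) → (P,P) → (P,0)
        obtain ⟨w2, hr2, hq2, hp2⟩ := stepA hq hp k 1 w1
        obtain ⟨w3, hr3, hq3, hp3⟩ := stepB hq hp k (-1) w2
        refine ⟨w3, Reach_trans hr1 (Reach_trans hr2 hr3), ?_, ?_, ?_⟩
        · rw [hp3, hq2, hp2, hq1', hp1, hR]
          ring
        · rw [hq3, hq2, hq1', hp1, hR]
          simp only [zero_add, one_mul]
          exact Int.dvd_of_emod_eq_zero hR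
        · rw [hq3, hq2, hq1', hp1, hR]
          simp
          exact dvd_refl _
      · obtain ⟨w2, hr2, hq2, hp2⟩ := stepB hq hp k (-(P / R)) w1
        have hq2' : qcoord s k w2 = R := by rw [hq2, hq1']
        have hp2' : pcoord s k w2 = P % R := by
          rw [hp2, hp1, hq1', Int.emod_def]; ring
        have hmeas : (pcoord s k w2).natAbs ≤ N := by
          rw [hp2']
          have h1 : (P % R).natAbs < R.natAbs := natAbs_emod_lt P R hR
          have h2 : R.natAbs < P.natAbs := hRdef ▸ natAbs_emod_lt Q P hP
          omega
        obtain ⟨w3, hr3, hp3, hd1, hd2⟩ := ih w2 hmeas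
        refine ⟨w3, Reach_trans hr1 (Reach_trans hr2 hr3), hp3, ?_, ?_⟩
        · -- q w3 ∣ R and q w3 ∣ P % R ⇒ ∣ P ⇒ ∣ Q
          rw [hq2'] at hd1
          rw [hp2'] at hd2
          have hdP : qcoord s k w3 ∣ P := by
            have := Int.emod_add_mul_ediv P R
            calc qcoord s k w3 ∣ P % R + R * (P / R) :=
              dvd_add hd2 (Dvd.dvd.mul_right hd1 _)
            _ = P := this
          have hdQ : qcoord s k w3 ∣ Q := by
            have := Int.emod_add_mul_ediv Q P
            calc qcoord s k w3 ∣ Q % P + P * (Q / P) :=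
              dvd_add hd1 (Dvd.dvd.mul_right hdP _)
            _ = Q := this
          exact hdQ
        · rw [hq2'] at hd1
          rw [hp2'] at hd2
          have hdP : qcoord s k w3 ∣ P := by
            have := Int.emod_add_mul_ediv P R
            calc qcoord s k w3 ∣ P % R + R * (P / R) :=
              dvd_add hd2 (Dvd.dvd.mul_right hd1 _)
            _ = P := this
          exact hdP

include hq hp in
lemma pair_reduce (k : Fin s) (v : Fin (2*s) → ℤ) :
    ∃ w, Reach τ {k} v w ∧ pcoord s k w = 0
      ∧ qcoord s k w ∣ qcoord s k v ∧ qcoord s k w ∣ pcoord s k v :=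
  pair_euclid hq hp k (pcoord s k v).natAbs v le_rfl

end steps

variable {s : ℕ}

lemma natAbs_le_of_dvd {a b : ℤ} (h : a ∣ b) (hb : b ≠ 0) : a.natAbs ≤ b.natAbs :=
  Nat.le_of_dvd (Int.natAbs_pos.mpr hb) (Int.natAbs_dvd_natAbs.mpr h)

section merge

variable [NeZero s] {τ : GE s}
variable (hq : ∀ (v : Fin (2 * s) → ℤ) (i j : Fin s), (j : ℕ) = ((i : ℕ) + 1) % s →
        qcoord s j (τ v) = qcoord s i v)
variable (hp : ∀ (v : Fin (2 * s) → ℤ) (i j : Fin s), (j : ℕ) = ((i : ℕ) + 1) % s →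
        pcoord s j (τ v) = pcoord s i v)

include hq hp in
lemma merge2 (a b : Fin s) (hab : (b:ℕ)+1 = (a:ℕ)) : ∀ N : ℕ, ∀ v : Fin (2*s) → ℤ,
    (qcoord s b v).natAbs + (qcoord s a v).natAbs ≤ N →
    pcoord s b v = 0 → pcoord s a v = 0 →
    ∃ w, Reach τ {a, b} v w
      ∧ qcoord s a w = 0 ∧ pcoord s a w = 0 ∧ pcoord s b w = 0 := by
  have hFne : a ≠ b := fun hc => by
    have := congrArg Fin.val hc; omega
  have hFne' : b ≠ a := Ne.symm hFne
  have hsub1 : ({a} : Finset (Fin s)) ⊆ {a, b} := by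
    intro x hx; rw [Finset.mem_singleton] at hx; rw [Finset.mem_insert]; exact Or.inl hx
  have hsub2 : ({b} : Finset (Fin s)) ⊆ {a, b} := by
    intro x hx; rw [Finset.mem_singleton] at hx
    rw [Finset.mem_insert, Finset.mem_singleton]; exact Or.inr hx
  have hbna : b ∉ ({a} : Finset (Fin s)) := by rw [Finset.mem_singleton]; exact hFne'
  have hanb : a ∉ ({b} : Finset (Fin s)) := by rw [Finset.mem_singleton]; exact hFne
  intro N
  induction N with
  | zero =>
    intro v hN hp' hpm
    have he : qcoord s a v = 0 := by omega
    exact ⟨v, Reach_refl τ _ v, he, hpm, hp'⟩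
  | succ N ih =>
    intro v hN hp' hpm
    by_cases he : qcoord s a v = 0
    · exact ⟨v, Reach_refl τ _ v, he, hpm, hp'⟩
    · set d1 := qcoord s b v with hd1def
      set e := qcoord s a v with hedef
      by_cases hd1 : d1 = 0
      · -- transfer case: pair b is zero
        obtain ⟨w1, hr1, hq1, hp1⟩ := stepB hq hp a 1 v
        have hw1b := Reach_coords hr1 b hbna
        obtain ⟨w2, hr2, hq2a, hq2b, hp2⟩ := stepC (τ := τ) a b hab 1 w1
        have hw2qa : qcoord s a w2 = 0 := by
          rw [hq2a, hq1, hw1b.2, hp1, hpm, hp']; ring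
        have hw2qb : qcoord s b w2 = e := by
          rw [hq2b, hw1b.1, hw1b.2, hp1, hpm, hp', ← hd1def, hd1]; ring
        have hw2pa : pcoord s a w2 = e := by
          rw [hp2 a, hp1, hpm]; ring
        have hw2pb : pcoord s b w2 = 0 := by
          rw [hp2 b, hw1b.2, hp']
        obtain ⟨w3, hr3, hq3, hp3⟩ := stepA hq hp a 1 w2
        have hw3a : qcoord s a w3 = e ∧ pcoord s a w3 = e :=
          ⟨by rw [hq3, hw2qa, hw2pa]; ring, by rw [hp3, hw2pa]⟩
        obtain ⟨w4, hr4, hq4, hp4⟩ := stepB hq hp a (-1) w3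
        have hw4a : qcoord s a w4 = e ∧ pcoord s a w4 = 0 :=
          ⟨by rw [hq4, hw3a.1], by rw [hp4, hw3a.1, hw3a.2]; ring⟩
        have hw4b : qcoord s b w4 = e ∧ pcoord s b w4 = 0 := by
          have h3 := Reach_coords hr3 b hbna
          have h4 := Reach_coords hr4 b hbna
          exact ⟨by rw [h4.1, h3.1, hw2qb], by rw [h4.2, h3.2, hw2pb]⟩
        obtain ⟨w5, hr5, hq5, hp5⟩ := stepB hq hp b 1 w4
        have hw5a : qcoord s a w5 = e ∧ pcoord s a w5 = 0 := by
          have h5 := Reach_coords hr5 a hanb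
          exact ⟨by rw [h5.1, hw4a.1], by rw [h5.2, hw4a.2]⟩
        have hw5b : qcoord s b w5 = e ∧ pcoord s b w5 = e :=
          ⟨by rw [hq5, hw4b.1], by rw [hp5, hw4b.1, hw4b.2]; ring⟩
        obtain ⟨w6, hr6, hq6a, hq6b, hp6⟩ := stepC (τ := τ) a b hab (-1) w5
        have hw6a : qcoord s a w6 = 0 ∧ pcoord s a w6 = 0 :=
          ⟨by rw [hq6a, hw5a.1, hw5b.2, hw5a.2]; ring, by rw [hp6 a, hw5a.2]⟩
        obtain ⟨w7, hr7, hp7, _, _⟩ := pair_reduce hq hp b w6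
        have hw7a := Reach_coords hr7 a hanb
        refine ⟨w7, ?_, by rw [hw7a.1, hw6a.1], by rw [hw7a.2, hw6a.2], hp7⟩
        exact Reach_trans (Reach_mono hsub1 hr1) (Reach_trans hr2
          (Reach_trans (Reach_mono hsub1 hr3) (Reach_trans (Reach_mono hsub1 hr4)
          (Reach_trans (Reach_mono hsub2 hr5) (Reach_trans hr6
            (Reach_mono hsub2 hr7))))))
      · by_cases hcmp : d1.natAbs ≤ e.natAbs
        · -- reduce e modulo d1
          obtain ⟨w1, hr1, hq1, hp1⟩ := stepB hq hp b 1 v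
          have hw1a := Reach_coords hr1 a hanb
          obtain ⟨w2, hr2, hq2a, hq2b, hp2⟩ := stepC (τ := τ) a b hab (-(e / d1)) w1
          have hOm : pcoord s b w1 - pcoord s a w1 = d1 := by
            rw [hp1, hw1a.2, hp', hpm, hd1def]; ring
          have hw2a : qcoord s a w2 = e % d1 := by
            rw [hq2a, hOm, hw1a.1, ← hedef, Int.emod_def]; ring
          have hw2pa : pcoord s a w2 = 0 := by rw [hp2 a, hw1a.2, hpm]
          have hw2pb : pcoord s b w2 = d1 := by
            rw [hp2 b, hp1, hp', hd1def]; ring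
          obtain ⟨w3, hr3, hp3, hd3a, hd3b⟩ := pair_reduce hq hp b w2
          have hw3a := Reach_coords hr3 a hanb
          have hd2d1 : qcoord s b w3 ∣ d1 := by rw [hw2pb] at hd3b; exact hd3b
          have hmeas : (qcoord s b w3).natAbs + (qcoord s a w3).natAbs ≤ N := by
            have h1 : (qcoord s b w3).natAbs ≤ d1.natAbs := natAbs_le_of_dvd hd2d1 hd1
            have h2 : (qcoord s a w3).natAbs < d1.natAbs := by
              rw [hw3a.1, hw2a]
              exact natAbs_emod_lt e d1 hd1
            have h3 : 0 < e.natAbs := Int.natAbs_pos.mpr he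
            omega
          obtain ⟨w4, hr4, hc1, hc2, hc3⟩ := ih w3 hmeas hp3 (by rw [hw3a.2, hw2pa])
          refine ⟨w4, ?_, hc1, hc2, hc3⟩
          exact Reach_trans (Reach_mono hsub2 hr1) (Reach_trans hr2
            (Reach_trans (Reach_mono hsub2 hr3) hr4))
        · -- reduce d1 modulo e
          obtain ⟨w1, hr1, hq1, hp1⟩ := stepB hq hp a 1 v
          have hw1b := Reach_coords hr1 b hbna
          obtain ⟨w2, hr2, hq2a, hq2b, hp2⟩ := stepC (τ := τ) a b hab (-(d1 / e)) w1
          have hOm : pcoord s b w1 - pcoord s a w1 = -e := by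
            rw [hw1b.2, hp', hp1, hpm, hedef]; ring
          have hw2b : qcoord s b w2 = d1 % e := by
            rw [hq2b, hOm, hw1b.1, ← hd1def, Int.emod_def]; ring
          have hw2pb : pcoord s b w2 = 0 := by rw [hp2 b, hw1b.2, hp']
          have hw2pa : pcoord s a w2 = e := by
            rw [hp2 a, hp1, hpm, hedef]; ring
          obtain ⟨w3, hr3, hp3, hd3a, hd3b⟩ := pair_reduce hq hp a w2
          have hw3b := Reach_coords hr3 b hbna
          have he2e : qcoord s a w3 ∣ e := by rw [hw2pa] at hd3b; exact hd3b
          have hmeas : (qcoord s b w3).natAbs + (qcoord s a w3).natAbs ≤ N := by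
            have h1 : (qcoord s a w3).natAbs ≤ e.natAbs := natAbs_le_of_dvd he2e he
            have h2 : (qcoord s b w3).natAbs < e.natAbs := by
              rw [hw3b.1, hw2b]
              exact natAbs_emod_lt d1 e he
            omega
          obtain ⟨w4, hr4, hc1, hc2, hc3⟩ := ih w3 hmeas (by rw [hw3b.2, hw2pb]) hp3
          refine ⟨w4, ?_, hc1, hc2, hc3⟩
          exact Reach_trans (Reach_mono hsub1 hr1) (Reach_trans hr2
            (Reach_trans (Reach_mono hsub1 hr3) hr4))

include hq hp in
lemma merge (a b : Fin s) (hab : (b:ℕ)+1 = (a:ℕ)) (v : Fin (2*s) → ℤ) :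
    ∃ w, Reach τ {a, b} v w
      ∧ qcoord s a w = 0 ∧ pcoord s a w = 0 ∧ pcoord s b w = 0 := by
  have hFne : a ≠ b := fun hc => by
    have := congrArg Fin.val hc; omega
  have hsub1 : ({a} : Finset (Fin s)) ⊆ {a, b} := by
    intro x hx; rw [Finset.mem_singleton] at hx; rw [Finset.mem_insert]; exact Or.inl hx
  have hsub2 : ({b} : Finset (Fin s)) ⊆ {a, b} := by
    intro x hx; rw [Finset.mem_singleton] at hx
    rw [Finset.mem_insert, Finset.mem_singleton]; exact Or.inr hx
  obtain ⟨w1, hr1, hpm1, _, _⟩ := pair_reduce hq hp a v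
  obtain ⟨w2, hr2, hpm2, _, _⟩ := pair_reduce hq hp b w1
  have hw2a := Reach_coords hr2 a (by rw [Finset.mem_singleton]; exact hFne)
  obtain ⟨w3, hr3, hc1, hc2, hc3⟩ := merge2 hq hp a b hab
    ((qcoord s b w2).natAbs + (qcoord s a w2).natAbs) w2
    le_rfl hpm2 (by rw [hw2a.2, hpm1])
  exact ⟨w3, Reach_trans (Reach_mono hsub1 hr1)
    (Reach_trans (Reach_mono hsub2 hr2) hr3), hc1, hc2, hc3⟩

end merge

variable {s : ℕ}

/-- the basis vector with q-coords δ_k, p-coords 0. -/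
def avec (k : Fin s) : Fin (2*s) → ℤ := fun i => if (i:ℕ) ≤ 2*(k:ℕ)+1 then 1 else 0

/-- the basis vector with p-coords δ_k, q-coords 0. -/
def bvec (k : Fin s) : Fin (2*s) → ℤ :=
  fun i => if (i:ℕ) = 2*(k:ℕ)+1 ∨ (i:ℕ) = 2*(k:ℕ)+2 then 1 else 0

lemma Xc_avec (k : Fin s) : ∀ j,
    Xc s j (avec k) = if j % 2 = 0 ∧ j ≤ 2*(k:ℕ) ∧ j < 2*s then 1 else 0 := by
  have hks : (k:ℕ) < s := k.isLt
  intro j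
  induction j with
  | zero =>
    rw [Xc_zero (by omega)]
    unfold avec
    rw [if_pos (by simp), if_pos (by omega)]
  | succ j ih =>
    by_cases h : j + 1 < 2*s
    · rw [Xc_succ h, ih]
      have hav : avec k ⟨j+1, h⟩ = if j+1 ≤ 2*(k:ℕ)+1 then 1 else 0 := rfl
      rw [hav]
      rcases Nat.even_or_odd j with ⟨u, hu⟩ | ⟨u, hu⟩
      · -- j even, j+1 odd: target 0
        rw [if_neg (by omega : ¬ ((j+1) % 2 = 0 ∧ j+1 ≤ 2*(k:ℕ) ∧ j+1 < 2*s))]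
        by_cases h2 : j ≤ 2*(k:ℕ)
        · rw [if_pos (by omega), if_pos (by omega)]; ring
        · rw [if_neg (by omega), if_neg (by omega)]; ring
      · -- j odd, j+1 even
        rw [if_neg (by omega : ¬ (j % 2 = 0 ∧ j ≤ 2*(k:ℕ) ∧ j < 2*s))]
        by_cases h2 : j + 1 ≤ 2*(k:ℕ)
        · rw [if_pos (by omega), if_pos (by omega)]; ring
        · rw [if_neg (by omega), if_neg (by omega)]; ring
    · rw [Xc_out (by omega), if_neg (by omega)]

lemma Xc_bvec (k : Fin s) : ∀ j,
    Xc s j (bvec k) = if j = 2*(k:ℕ)+1 then 1 else 0 := by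
  have hks : (k:ℕ) < s := k.isLt
  intro j
  induction j with
  | zero =>
    rw [Xc_zero (by omega)]
    unfold bvec
    rw [if_neg (by omega : ¬ ((0:ℕ) = 2*(k:ℕ)+1 ∨ (0:ℕ) = 2*(k:ℕ)+2)),
      if_neg (by omega)]
  | succ j ih =>
    by_cases h : j + 1 < 2*s
    · rw [Xc_succ h, ih]
      have hbv : bvec k ⟨j+1, h⟩
          = if j+1 = 2*(k:ℕ)+1 ∨ j+1 = 2*(k:ℕ)+2 then 1 else 0 := rfl
      rw [hbv]
      by_cases h1 : j+1 = 2*(k:ℕ)+1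
      · rw [if_pos (Or.inl h1), if_neg (by omega), if_pos h1]; ring
      · by_cases h2 : j+1 = 2*(k:ℕ)+2
        · rw [if_pos (Or.inr h2), if_pos (by omega), if_neg (by omega)]; ring
        · rw [if_neg (by omega), if_neg (by omega), if_neg h1]; ring
    · rw [Xc_out (by omega), if_neg (by omega)]

lemma Qc_avec (k : Fin s) (m : ℕ) :
    Qc s m (avec k) = if m = (k:ℕ) then 1 else 0 := by
  have hks : (k:ℕ) < s := k.isLt
  unfold Qc
  rw [Xc_avec, Xc_avec]
  by_cases h : m = (k:ℕ)
  · rw [if_pos (by omega), if_neg (by omega), if_pos h]; ring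
  · by_cases h2 : m < (k:ℕ)
    · rw [if_pos (by omega), if_pos (by omega), if_neg h]; ring
    · rw [if_neg (by omega), if_neg (by omega), if_neg h]; ring

lemma Pc_avec (k : Fin s) (m : ℕ) : Pc s m (avec k) = 0 := by
  unfold Pc
  rw [Xc_avec, if_neg (by omega)]

lemma Qc_bvec (k : Fin s) (m : ℕ) : Qc s m (bvec k) = 0 := by
  unfold Qc
  rw [Xc_bvec, Xc_bvec, if_neg (by omega), if_neg (by omega)]
  ring

lemma Pc_bvec (k : Fin s) (m : ℕ) :
    Pc s m (bvec k) = if m = (k:ℕ) then 1 else 0 := by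
  unfold Pc
  rw [Xc_bvec]
  by_cases h : m = (k:ℕ)
  · rw [if_pos (by omega), if_pos h]
  · rw [if_neg (by omega), if_neg h]

lemma q_avec (k j : Fin s) : qcoord s j (avec k) = if (j:ℕ) = (k:ℕ) then 1 else 0 := by
  rw [qcoord_eq_Qc, Qc_avec]

lemma p_avec (k j : Fin s) : pcoord s j (avec k) = 0 := by
  rw [pcoord_eq_Pc, Pc_avec]

lemma q_bvec (k j : Fin s) : qcoord s j (bvec k) = 0 := by
  rw [qcoord_eq_Qc, Qc_bvec]

lemma p_bvec (k j : Fin s) : pcoord s j (bvec k) = if (j:ℕ) = (k:ℕ) then 1 else 0 := by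
  rw [pcoord_eq_Pc, Pc_bvec]

lemma Jform_avec_left (k : Fin s) (z : Fin (2*s) → ℤ) :
    Jform (avec k) z = pcoord s k z := by
  rw [Jform_pairs]
  have key : ∀ i : Fin s,
      qcoord s i (avec k) * pcoord s i z - pcoord s i (avec k) * qcoord s i z
      = if (i:ℕ) = (k:ℕ) then pcoord s i z else 0 := by
    intro i
    rw [q_avec, p_avec]
    by_cases h : (i:ℕ) = (k:ℕ)
    · rw [if_pos h, if_pos h]; ring
    · rw [if_neg h, if_neg h]; ring
  rw [Finset.sum_congr rfl fun i _ => key i, sum_if_eq (fun i => pcoord s i z) (k:ℕ) k.isLt]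

lemma Jform_bvec_right (z : Fin (2*s) → ℤ) (k : Fin s) :
    Jform z (bvec k) = qcoord s k z := by
  rw [Jform_pairs]
  have key : ∀ i : Fin s,
      qcoord s i z * pcoord s i (bvec k) - pcoord s i z * qcoord s i (bvec k)
      = if (i:ℕ) = (k:ℕ) then qcoord s i z else 0 := by
    intro i
    rw [q_bvec, p_bvec]
    by_cases h : (i:ℕ) = (k:ℕ)
    · rw [if_pos h, if_pos h]; ring
    · rw [if_neg h, if_neg h]; ring
  rw [Finset.sum_congr rfl fun i _ => key i, sum_if_eq (fun i => qcoord s i z) (k:ℕ) k.isLt]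

lemma Jform_avec_bvec (k : Fin s) : Jform (avec k) (bvec k) = 1 := by
  rw [Jform_avec_left, p_bvec, if_pos rfl]

/-- the set of pairs at or above k -/
def Sk (k : Fin s) : Finset (Fin s) := Finset.univ.filter (fun j => (k:ℕ) ≤ (j:ℕ))

lemma mem_Sk {k j : Fin s} : j ∈ Sk k ↔ (k:ℕ) ≤ (j:ℕ) := by
  unfold Sk
  rw [Finset.mem_filter]
  simp

section alg

variable [NeZero s] {τ : GE s}
variable (hq : ∀ (v : Fin (2 * s) → ℤ) (i j : Fin s), (j : ℕ) = ((i : ℕ) + 1) % s →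
        qcoord s j (τ v) = qcoord s i v)
variable (hp : ∀ (v : Fin (2 * s) → ℤ) (i j : Fin s), (j : ℕ) = ((i : ℕ) + 1) % s →
        pcoord s j (τ v) = pcoord s i v)

include hq hp in
lemma reduce_above (k : Fin s) : ∀ d : ℕ, ∀ v : Fin (2*s) → ℤ,
    (∀ j : Fin s, (k:ℕ)+d < (j:ℕ) → qcoord s j v = 0 ∧ pcoord s j v = 0) →
    ∃ w, Reach τ (Sk k) v w
      ∧ (∀ j : Fin s, (k:ℕ) < (j:ℕ) → qcoord s j w = 0 ∧ pcoord s j w = 0)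
      ∧ pcoord s k w = 0 := by
  intro d
  induction d with
  | zero =>
    intro v hv
    obtain ⟨w, hr, hpw, _, _⟩ := pair_reduce hq hp k v
    refine ⟨w, Reach_mono ?_ hr, ?_, hpw⟩
    · intro x hx
      rw [Finset.mem_singleton] at hx
      rw [hx, mem_Sk]
    · intro j hj
      have hjk : j ∉ ({k} : Finset (Fin s)) := by
        rw [Finset.mem_singleton]
        intro hc
        rw [hc] at hj
        omega
      have hcoords := Reach_coords hr j hjk
      rw [hcoords.1, hcoords.2]
      exact hv j (by omega)
  | succ d ih =>
    intro v hv
    by_cases hms : (k:ℕ)+d+1 < s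
    · set a : Fin s := ⟨(k:ℕ)+d+1, hms⟩ with hadef
      set b : Fin s := ⟨(k:ℕ)+d, by omega⟩ with hbdef
      have hab : (b:ℕ)+1 = (a:ℕ) := rfl
      obtain ⟨w1, hr1, hqa, hpa, hpb⟩ := merge hq hp a b hab v
      have hnext : ∀ j : Fin s, (k:ℕ)+d < (j:ℕ) →
          qcoord s j w1 = 0 ∧ pcoord s j w1 = 0 := by
        intro j hj
        by_cases hja : j = a
        · rw [hja]; exact ⟨hqa, hpa⟩
        · have hjb : j ≠ b := by
            intro hc
            rw [hc] at hj
            simp only [hbdef] at hj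
            omega
          have hcoords := Reach_coords hr1 j (by
            rw [Finset.mem_insert, Finset.mem_singleton]
            push_neg
            exact ⟨hja, hjb⟩)
          rw [hcoords.1, hcoords.2]
          apply hv j
          have hja' : (j:ℕ) ≠ (a:ℕ) := fun hc => hja (Fin.ext hc)
          simp only [hadef] at hja'
          omega
      obtain ⟨w2, hr2, hc1, hc2⟩ := ih w1 hnext
      refine ⟨w2, Reach_trans (Reach_mono ?_ hr1) hr2, hc1, hc2⟩
      intro x hx
      rw [Finset.mem_insert, Finset.mem_singleton] at hx
      rw [mem_Sk]
      rcases hx with h | h <;> rw [h]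
      · show (k:ℕ) ≤ (a:ℕ); simp only [hadef]; omega
      · show (k:ℕ) ≤ (b:ℕ); simp only [hbdef]; omega
    · apply ih v
      intro j hj
      have := j.isLt
      exact absurd hj (by omega)

include hq hp in
lemma sign_fix (k : Fin s) (v : Fin (2*s) → ℤ)
    (hqv : qcoord s k v = -1) (hpv : pcoord s k v = 0) :
    ∃ w, Reach τ {k} v w ∧ qcoord s k w = 1 ∧ pcoord s k w = 0 := by
  obtain ⟨w1, hr1, hq1, hp1⟩ := stepB hq hp k 1 v
  obtain ⟨w2, hr2, hq2, hp2⟩ := stepA hq hp k (-2) w1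
  obtain ⟨w3, hr3, hq3, hp3⟩ := stepB hq hp k 1 w2
  refine ⟨w3, Reach_trans hr1 (Reach_trans hr2 hr3), ?_, ?_⟩
  · rw [hq3, hq2, hq1, hp1, hqv, hpv]; ring
  · rw [hp3, hq2, hp2, hq1, hp1, hqv, hpv]; ring

end alg

variable {s : ℕ}

lemma coords_det_fin {v w : Fin (2*s) → ℤ}
    (h : ∀ j : Fin s, qcoord s j v = qcoord s j w ∧ pcoord s j v = pcoord s j w) :
    v = w := by
  apply coords_det (s := s)
  · intro m
    by_cases hm : m < s
    · rw [← qcoord_eq_Qc ⟨m, hm⟩, ← qcoord_eq_Qc ⟨m, hm⟩]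
      exact (h ⟨m, hm⟩).1
    · rw [Qc_out (by omega), Qc_out (by omega)]
  · intro m
    by_cases hm : m < s
    · rw [← pcoord_eq_Pc ⟨m, hm⟩, ← pcoord_eq_Pc ⟨m, hm⟩]
      exact (h ⟨m, hm⟩).2
    · rw [Pc_out (by omega), Pc_out (by omega)]

section phases

variable [NeZero s] {τ : GE s}
variable (hq : ∀ (v : Fin (2 * s) → ℤ) (i j : Fin s), (j : ℕ) = ((i : ℕ) + 1) % s →
        qcoord s j (τ v) = qcoord s i v)
variable (hp : ∀ (v : Fin (2 * s) → ℤ) (i j : Fin s), (j : ℕ) = ((i : ℕ) + 1) % s →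
        pcoord s j (τ v) = pcoord s i v)

include hq hp in
lemma helperA (k : Fin s) (t : ℤ) :
    ∃ g : GE s, g ∈ Hgrp s τ
      ∧ (∀ z, qcoord s k (g z) = qcoord s k z - t * pcoord s k z)
      ∧ (∀ z (j : Fin s), j ≠ k → qcoord s j (g z) = qcoord s j z)
      ∧ (∀ z (j : Fin s), pcoord s j (g z) = pcoord s j z)
      ∧ (∀ x, pcoord s k x = 0 → g x = x) := by
  obtain ⟨g, hH, hact⟩ := moveA hq hp k t
  refine ⟨g, hH, ?_, ?_, ?_, ?_⟩
  · intro z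
    rw [(hact z).1 k, omc_cqSing]
    unfold cqSing
    rw [if_pos rfl]
    ring
  · intro z j hj
    rw [(hact z).1 j]
    unfold cqSing
    rw [if_neg hj]
    ring
  · intro z j
    rw [(hact z).2 j]
    ring
  · intro x hx
    apply TAct_fix hact
    rw [omc_cqSing, hx]
    ring

omit [NeZero s] in
lemma helperC (a b : Fin s) (hab : (b:ℕ)+1 = (a:ℕ)) (t : ℤ) :
    ∃ g : GE s, g ∈ Hgrp s τ
      ∧ (∀ z, qcoord s a (g z) = qcoord s a z + t * (pcoord s b z - pcoord s a z))
      ∧ (∀ z, qcoord s b (g z) = qcoord s b z - t * (pcoord s b z - pcoord s a z))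
      ∧ (∀ z (j : Fin s), j ≠ a → j ≠ b → qcoord s j (g z) = qcoord s j z)
      ∧ (∀ z (j : Fin s), pcoord s j (g z) = pcoord s j z)
      ∧ (∀ x, pcoord s b x = pcoord s a x → g x = x) := by
  have hm1 : 1 ≤ (a:ℕ) := by omega
  obtain ⟨g, hH, hact⟩ := moveC τ (a:ℕ) hm1 a.isLt t
  have homc : ∀ z, omc (cqOdd s (a:ℕ)) (fun _ => 0) z
      = pcoord s b z - pcoord s a z := by
    intro z
    rw [omc_odd (a:ℕ) a.isLt z, if_neg (by omega), pcoord_eq_Pc, pcoord_eq_Pc]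
    have e1 : ((b:ℕ) : ℕ) = (a:ℕ) - 1 := by omega
    rw [e1]
  refine ⟨g, hH, ?_, ?_, ?_, ?_, ?_⟩
  · intro z
    rw [(hact z).1 a, homc]
    unfold cqOdd
    rw [if_pos rfl, if_neg (show ¬ ((a:ℕ)+1 = (a:ℕ)) by omega)]
    ring
  · intro z
    rw [(hact z).1 b, homc]
    unfold cqOdd
    rw [if_neg (show ¬ ((b:ℕ) = (a:ℕ)) by omega), if_pos hab]
    ring
  · intro z j hja hjb
    rw [(hact z).1 j]
    unfold cqOdd
    rw [if_neg (show ¬ ((j:ℕ) = (a:ℕ)) from fun hc => hja (Fin.ext hc)),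
      if_neg (show ¬ ((j:ℕ)+1 = (a:ℕ)) from
        fun hc => hjb (Fin.ext (show (j:ℕ) = (b:ℕ) by omega)))]
    ring
  · intro z j
    rw [(hact z).2 j]
    ring
  · intro x hx
    apply TAct_fix hact
    rw [homc, hx]
    ring

include hq hp in
lemma phase1 (k : Fin s) (v y : Fin (2*s) → ℤ)
    (hlow : ∀ j : Fin s, (j:ℕ) < (k:ℕ) → qcoord s j v = 0 ∧ pcoord s j v = 0)
    (hcert : Jform v y = 1) :
    Reach τ (Sk k) v (avec k) := by
  obtain ⟨w, hr, hhigh, hpk⟩ := reduce_above hq hp k s v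
    (by intro j hj; exact absurd hj (by have := j.isLt; omega))
  have hloww : ∀ j : Fin s, (j:ℕ) < (k:ℕ) →
      qcoord s j w = 0 ∧ pcoord s j w = 0 := by
    intro j hj
    have hcoords := Reach_coords hr j (by rw [mem_Sk]; omega)
    rw [hcoords.1, hcoords.2]
    exact hlow j hj
  have hq0 : ∀ j : Fin s, j ≠ k → qcoord s j w = 0 := by
    intro j hj
    have hne : (j:ℕ) ≠ (k:ℕ) := fun hc => hj (Fin.ext hc)
    rcases Nat.lt_or_ge (j:ℕ) (k:ℕ) with h | h
    · exact (hloww j h).1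
    · exact (hhigh j (by omega)).1
  have hp0 : ∀ j : Fin s, pcoord s j w = 0 := by
    intro j
    by_cases hj : j = k
    · rw [hj]; exact hpk
    · have hne : (j:ℕ) ≠ (k:ℕ) := fun hc => hj (Fin.ext hc)
      rcases Nat.lt_or_ge (j:ℕ) (k:ℕ) with h | h
      · exact (hloww j h).2
      · exact (hhigh j (by omega)).2
  obtain ⟨g, hMv, hgv⟩ := hr
  have hgSp : ∀ a b, Jform (g a) (g b) = Jform a b :=
    (mem_SpJ g).mp (Hgrp_le_SpJ hq hp hMv.1)
  have h1 : Jform w (g y) = 1 := by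
    rw [← hgv, hgSp]
    exact hcert
  have hwD : ∀ z, Jform w z = qcoord s k w * pcoord s k z := by
    intro z
    rw [Jform_pairs]
    have key : ∀ i : Fin s,
        qcoord s i w * pcoord s i z - pcoord s i w * qcoord s i z
        = if (i:ℕ) = (k:ℕ) then qcoord s k w * pcoord s i z else 0 := by
      intro i
      by_cases h : (i:ℕ) = (k:ℕ)
      · have : i = k := Fin.ext h
        subst this
        rw [if_pos h, hp0 i]
        ring
      · rw [if_neg h, hq0 i (fun hc => h (congrArg Fin.val hc)), hp0 i]
        ring
    rw [Finset.sum_congr rfl fun i _ => key i,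
      sum_if_eq (fun i => qcoord s k w * pcoord s i z) (k:ℕ) k.isLt]
  have hD : qcoord s k w * pcoord s k (g y) = 1 := by rw [← hwD]; exact h1
  have hDcases : qcoord s k w = 1 ∨ qcoord s k w = -1 :=
    Int.isUnit_iff.mp (IsUnit.of_mul_eq_one _ hD)
  rcases hDcases with hD1 | hD1
  · have hwe : w = avec k := by
      apply coords_det_fin
      intro j
      rw [q_avec, p_avec, hp0 j]
      by_cases h : (j:ℕ) = (k:ℕ)
      · have : j = k := Fin.ext h
        subst this
        rw [if_pos h, hD1]
        exact ⟨rfl, rfl⟩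
      · rw [if_neg h, hq0 j (fun hc => h (congrArg Fin.val hc))]
        exact ⟨rfl, rfl⟩
    exact ⟨g, hMv, by rw [hgv, hwe]⟩
  · obtain ⟨w2, hr2, hq2, hp2⟩ := sign_fix hq hp k w hD1 hpk
    have hwe : w2 = avec k := by
      apply coords_det_fin
      intro j
      rw [q_avec, p_avec]
      by_cases h : (j:ℕ) = (k:ℕ)
      · have : j = k := Fin.ext h
        subst this
        rw [if_pos h, hq2, hp2]
        exact ⟨rfl, rfl⟩
      · have hjk : j ≠ k := fun hc => h (congrArg Fin.val hc)
        have hcoords := Reach_coords hr2 j (by rw [Finset.mem_singleton]; exact hjk)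
        rw [if_neg h, hcoords.1, hcoords.2, hq0 j hjk, hp0 j]
        exact ⟨rfl, rfl⟩
    rw [← hwe]
    refine Reach_trans ⟨g, hMv, hgv⟩ (Reach_mono ?_ hr2)
    intro x hx
    rw [Finset.mem_singleton] at hx
    rw [hx, mem_Sk]

end phases

variable {s : ℕ}

section phases2

variable [NeZero s] {τ : GE s}
variable (hq : ∀ (v : Fin (2 * s) → ℤ) (i j : Fin s), (j : ℕ) = ((i : ℕ) + 1) % s →
        qcoord s j (τ v) = qcoord s i v)
variable (hp : ∀ (v : Fin (2 * s) → ℤ) (i j : Fin s), (j : ℕ) = ((i : ℕ) + 1) % s →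
        pcoord s j (τ v) = pcoord s i v)

include hq hp in
lemma phase2 (k : Fin s) (z : Fin (2*s) → ℤ)
    (hlow : ∀ j : Fin s, (j:ℕ) < (k:ℕ) → qcoord s j z = 0 ∧ pcoord s j z = 0)
    (hpk : pcoord s k z = 1) :
    ∃ h : GE s, h ∈ Hgrp s τ
      ∧ (∀ u (j : Fin s), (j:ℕ) < (k:ℕ) →
          qcoord s j (h u) = qcoord s j u ∧ pcoord s j (h u) = pcoord s j u)
      ∧ h z = bvec k ∧ h (avec k) = avec k := by
  obtain ⟨g1, hg1H, hg1k, hg1q, hg1p, hg1fix⟩ := helperA hq hp k (qcoord s k z)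
  have hz1k : qcoord s k (g1 z) = 0 := by
    rw [hg1k z, hpk]; ring
  have hz1p : ∀ j, pcoord s j (g1 z) = pcoord s j z := fun j => hg1p z j
  have hg1avec : g1 (avec k) = avec k := hg1fix _ (p_avec k k)
  by_cases hks : (k:ℕ)+1 < s
  · set a : Fin s := ⟨(k:ℕ)+1, hks⟩ with hadef
    have haval : (a:ℕ) = (k:ℕ)+1 := rfl
    have hkne : k ≠ a := fun hc => by
      have := congrArg Fin.val hc; omega
    obtain ⟨w2, hr2, hhigh2, hpa2⟩ := reduce_above hq hp a s (g1 z)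
      (by intro j hj; exact absurd hj (by have := j.isLt; omega))
    obtain ⟨g2, hMv2, hg2z⟩ := hr2
    have hkskip : k ∉ Sk a := by rw [mem_Sk]; omega
    have hg2avec : g2 (avec k) = avec k := by
      apply hMv2.2.2
      intro j hj
      rw [mem_Sk] at hj
      rw [q_avec, p_avec, if_neg (by omega)]
      exact ⟨rfl, rfl⟩
    have hw2k := hMv2.2.1 (g1 z) k hkskip
    have hw2qk : qcoord s k w2 = 0 := by rw [← hg2z, hw2k.1, hz1k]
    have hw2pk : pcoord s k w2 = 1 := by rw [← hg2z, hw2k.2, hz1p, hpk]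
    obtain ⟨g3, hg3H, hg3a, hg3b, hg3q, hg3p, hg3fix⟩ :=
      helperC (τ := τ) a k haval.symm (-(qcoord s a w2))
    have hg3avec : g3 (avec k) = avec k := hg3fix _ (by rw [p_avec, p_avec])
    have hz3qa : qcoord s a (g3 w2) = 0 := by
      rw [hg3a w2, hw2pk, hpa2]; ring
    have hz3qk : qcoord s k (g3 w2) = qcoord s a w2 := by
      rw [hg3b w2, hw2qk, hw2pk, hpa2]; ring
    have hz3p : ∀ j, pcoord s j (g3 w2) = pcoord s j w2 := fun j => hg3p w2 j
    obtain ⟨g4, hg4H, hg4k, hg4q, hg4p, hg4fix⟩ := helperA hq hp k (qcoord s a w2)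
    have hg4avec : g4 (avec k) = avec k := hg4fix _ (p_avec k k)
    have hz4qk : qcoord s k (g4 (g3 w2)) = 0 := by
      rw [hg4k, hz3qk, hz3p, hw2pk]; ring
    refine ⟨g4 * g3 * g2 * g1, ?_, ?_, ?_, ?_⟩
    · exact mul_mem (mul_mem (mul_mem hg4H hg3H) hMv2.1) hg1H
    · intro u j hj
      have happ : (g4 * g3 * g2 * g1) u = g4 (g3 (g2 (g1 u))) := rfl
      have hjk : j ≠ k := fun hc => by
        have := congrArg Fin.val hc; omega
      have hja : j ≠ a := fun hc => by
        have := congrArg Fin.val hc; omega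
      have h2 := hMv2.2.1 (g1 u) j (by rw [mem_Sk]; omega)
      rw [happ]
      constructor
      · rw [hg4q _ j hjk, hg3q _ j hja hjk, h2.1, hg1q _ j hjk]
      · rw [hg4p, hg3p, h2.2, hg1p]
    · have happ : (g4 * g3 * g2 * g1) z = g4 (g3 (g2 (g1 z))) := rfl
      rw [happ, hg2z]
      apply coords_det_fin
      intro j
      rw [q_bvec, p_bvec]
      by_cases hjk : (j:ℕ) = (k:ℕ)
      · have hje : j = k := Fin.ext hjk
        subst hje
        constructor
        · rw [hz4qk]
        · rw [if_pos rfl, hg4p, hz3p, hw2pk]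
      · have hjkf : j ≠ k := fun hc => hjk (congrArg Fin.val hc)
        by_cases hja : j = a
        · constructor
          · rw [hg4q _ j hjkf, hja, hz3qa]
          · rw [if_neg hjk, hg4p, hg3p, hja, hpa2]
        · have hjaf : (j:ℕ) ≠ (a:ℕ) := fun hc => hja (Fin.ext hc)
          rcases Nat.lt_or_ge (j:ℕ) (k:ℕ) with h | h
          · have hjskip : j ∉ Sk a := by rw [mem_Sk]; omega
            have h2 := hMv2.2.1 (g1 z) j hjskip
            constructor
            · rw [hg4q _ j hjkf, hg3q _ j hja hjkf, ← hg2z, h2.1, hg1q _ j hjkf,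
                (hlow j h).1]
            · rw [if_neg hjk, hg4p, hg3p, ← hg2z, h2.2, hz1p, (hlow j h).2]
          · have hjgta : (a:ℕ) < (j:ℕ) := by omega
            constructor
            · rw [hg4q _ j hjkf, hg3q _ j hja hjkf, (hhigh2 j hjgta).1]
            · rw [if_neg hjk, hg4p, hg3p, (hhigh2 j hjgta).2]
    · have happ : (g4 * g3 * g2 * g1) (avec k) = g4 (g3 (g2 (g1 (avec k)))) := rfl
      rw [happ, hg1avec, hg2avec, hg3avec, hg4avec]
  · refine ⟨g1, hg1H, ?_, ?_, hg1avec⟩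
    · intro u j hj
      have hjk : j ≠ k := fun hc => by
        have := congrArg Fin.val hc; omega
      exact ⟨hg1q u j hjk, hg1p u j⟩
    · apply coords_det_fin
      intro j
      rw [q_bvec, p_bvec]
      by_cases hjk : (j:ℕ) = (k:ℕ)
      · have hje : j = k := Fin.ext hjk
        subst hje
        exact ⟨by rw [hz1k], by rw [if_pos rfl, hz1p, hpk]⟩
      · have hjkf : j ≠ k := fun hc => hjk (congrArg Fin.val hc)
        have hjlt : (j:ℕ) < (k:ℕ) := by
          have := j.isLt; omega
        constructor
        · rw [hg1q _ j hjkf, (hlow j hjlt).1]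
        · rw [if_neg hjk, hz1p, (hlow j hjlt).2]

include hq hp in
lemma main_ind : ∀ d k : ℕ, k + d = s → ∀ T : GE s, T ∈ SpJ (2*s) →
    (∀ u (j : Fin s), (j:ℕ) < k →
      qcoord s j (T u) = qcoord s j u ∧ pcoord s j (T u) = pcoord s j u) →
    T ∈ Hgrp s τ := by
  intro d
  induction d with
  | zero =>
    intro k hk T hT hsupp
    have hT1 : T = 1 := by
      apply LinearEquiv.toLinearMap_injective
      apply LinearMap.ext
      intro u
      show T u = u
      exact coords_det_fin (fun j => hsupp u j (by have := j.isLt; omega))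
    rw [hT1]
    exact one_mem _
  | succ d ih =>
    intro k hk T hT hsupp
    have hks : k < s := by omega
    set Fk : Fin s := ⟨k, hks⟩ with hFk
    have hFkval : (Fk:ℕ) = k := rfl
    have hTJ : ∀ x y, Jform (T x) (T y) = Jform x y := (mem_SpJ T).mp hT
    have hlow : ∀ j : Fin s, (j:ℕ) < (Fk:ℕ) →
        qcoord s j (T (avec Fk)) = 0 ∧ pcoord s j (T (avec Fk)) = 0 := by
      intro j hj
      have h := hsupp (avec Fk) j hj
      rw [h.1, h.2, q_avec, p_avec, if_neg (by omega)]
      exact ⟨rfl, rfl⟩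
    have hcert : Jform (T (avec Fk)) (T (bvec Fk)) = 1 := by
      rw [hTJ]; exact Jform_avec_bvec Fk
    obtain ⟨g, hMvg, hgv⟩ := phase1 hq hp Fk (T (avec Fk)) (T (bvec Fk)) hlow hcert
    have hgSp := (mem_SpJ g).mp (Hgrp_le_SpJ hq hp hMvg.1)
    have hpkz : pcoord s Fk (g (T (bvec Fk))) = 1 := by
      have h1 : Jform (avec Fk) (g (T (bvec Fk))) = 1 := by
        rw [← hgv, hgSp, hTJ]; exact Jform_avec_bvec Fk
      rw [Jform_avec_left] at h1
      exact h1
    have hlowz : ∀ j : Fin s, (j:ℕ) < (Fk:ℕ) →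
        qcoord s j (g (T (bvec Fk))) = 0 ∧ pcoord s j (g (T (bvec Fk))) = 0 := by
      intro j hj
      have hjnot : j ∉ Sk Fk := by rw [mem_Sk]; omega
      have h1 := hMvg.2.1 (T (bvec Fk)) j hjnot
      have h2 := hsupp (bvec Fk) j hj
      rw [h1.1, h1.2, h2.1, h2.2, q_bvec, p_bvec, if_neg (by omega)]
      exact ⟨rfl, rfl⟩
    obtain ⟨h, hhH, hhlow, hhz, hhavec⟩ := phase2 hq hp Fk (g (T (bvec Fk))) hlowz hpkz
    set T' : GE s := h * g * T with hT'def
    have happ : ∀ u, T' u = h (g (T u)) := fun u => rfl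
    have hT'Sp : T' ∈ SpJ (2*s) :=
      mul_mem (mul_mem ((Hgrp_le_SpJ hq hp) hhH) ((Hgrp_le_SpJ hq hp) hMvg.1)) hT
    have hT'a : T' (avec Fk) = avec Fk := by rw [happ, hgv, hhavec]
    have hT'b : T' (bvec Fk) = bvec Fk := by rw [happ, hhz]
    have hT'J := (mem_SpJ T').mp hT'Sp
    have hsupp' : ∀ u (j : Fin s), (j:ℕ) < k+1 →
        qcoord s j (T' u) = qcoord s j u ∧ pcoord s j (T' u) = pcoord s j u := by
      intro u j hj
      by_cases hjk : (j:ℕ) = k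
      · have hjF : j = Fk := Fin.ext hjk
        rw [hjF]
        constructor
        · rw [← Jform_bvec_right (T' u) Fk]
          conv_lhs => rw [← hT'b]
          rw [hT'J, Jform_bvec_right]
        · rw [← Jform_avec_left Fk (T' u)]
          conv_lhs => rw [← hT'a]
          rw [hT'J, Jform_avec_left]
      · have hjlt : (j:ℕ) < k := by omega
        have h1 := hsupp u j hjlt
        have h2 := hMvg.2.1 (T u) j (by rw [mem_Sk]; omega)
        have h3 := hhlow (g (T u)) j hjlt
        rw [happ]
        constructor
        · rw [h3.1, h2.1, h1.1]
        · rw [h3.2, h2.2, h1.2]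
    have hT'mem : T' ∈ Hgrp s τ := ih (k+1) (by omega) T' hT'Sp hsupp'
    have hTeq : T = (h * g)⁻¹ * T' := by
      rw [hT'def, ← mul_assoc]
      exact (inv_mul_cancel_left (h*g) T).symm
    rw [hTeq]
    exact mul_mem (inv_mem (mul_mem hhH hMvg.1)) hT'mem

end phases2

lemma final_theorem (s : ℕ) (hs : 1 ≤ s)
    (τ : (Fin (2 * s) → ℤ) ≃ₗ[ℤ] (Fin (2 * s) → ℤ))
    (hq : ∀ (v : Fin (2 * s) → ℤ) (i j : Fin s), (j : ℕ) = ((i : ℕ) + 1) % s →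
        qcoord s j (τ v) = qcoord s i v)
    (hp : ∀ (v : Fin (2 * s) → ℤ) (i j : Fin s), (j : ℕ) = ((i : ℕ) + 1) % s →
        pcoord s j (τ v) = pcoord s i v) :
    (∀ v w, Jform (τ v) (τ w) = Jform v w) ∧
    Subgroup.closure (↑(Gn (2 * s)) ∪ {τ}) = SpJ (2 * s) := by
  haveI : NeZero s := ⟨by omega⟩
  refine ⟨tau_spj hq hp, ?_⟩
  apply le_antisymm
  · exact Hgrp_le_SpJ hq hp
  · intro T hT
    exact main_ind hq hp s 0 (by omega) T hT (by intro u j hj; exact absurd hj (by omega))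

end St19

/-- Let `τ` be the automorphism of `ℤ^{2s}` acting as the cyclic
shift `q_i ↦ q_{i+1}`, `p_i ↦ p_{i+1}` (indices mod `s`) on the symplectic
coordinates. Then `τ` preserves `J`, and together with `𝒢_{2s}` it generates the
full integral symplectic group of `J`. -/
theorem Gn_with_shift_generates_Sp (s : ℕ) (hs : 1 ≤ s)
    (τ : (Fin (2 * s) → ℤ) ≃ₗ[ℤ] (Fin (2 * s) → ℤ))
    (hq : ∀ (v : Fin (2 * s) → ℤ) (i j : Fin s), (j : ℕ) = ((i : ℕ) + 1) % s →
        qcoord s j (τ v) = qcoord s i v)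
    (hp : ∀ (v : Fin (2 * s) → ℤ) (i j : Fin s), (j : ℕ) = ((i : ℕ) + 1) % s →
        pcoord s j (τ v) = pcoord s i v) :
    (∀ v w, Jform (τ v) (τ w) = Jform v w) ∧
    Subgroup.closure (↑(Gn (2 * s)) ∪ {τ}) = SpJ (2 * s) :=
  St19.final_theorem s hs τ hq hp
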